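/- arXiv:math/0603188 — 3 statements merged into one kernel-verified Lean document; each statement's English description precedes it below -/
import Mathlib

section
/- An infinite-dimensional Banach space X is hereditarily indecomposable if and only if a(Y,Z) = 0 for every pair of infinite-dimensional closed subspaces Y, Z of X. -/
open Filter Topology
open scoped ENNReal

noncomputable section

/-- The angle `a(Y,Z) = inf {‖y - z‖ / ‖y + z‖ : y ∈ Y, z ∈ Z, y + z ≠ 0}`. -/
def subAngle {E : Type*} [SeminormedAddCommGroup E] [NormedSpace ℝ E]
    (Y Z : Submodule ℝ E) : ℝ≥0∞ :=
  ⨅ (y : Y) (z : Z) (_ : (y : E) + z ≠ 0),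
    ENNReal.ofReal ‖(y : E) - z‖ / ENNReal.ofReal ‖(y : E) + z‖

/-- Two subspaces `U`, `V` form a topological direct sum. -/
def IsTopDirectSum {E : Type*} [SeminormedAddCommGroup E] [NormedSpace ℝ E]
    (U V : Submodule ℝ E) : Prop :=
  U ⊓ V = ⊥ ∧ IsClosed ((U ⊔ V : Submodule ℝ E) : Set E) ∧
    ∃ C : ℝ, ∀ u ∈ U, ∀ v ∈ V, ‖u‖ ≤ C * ‖u + v‖

/-- A Banach space is decomposable if it is the topological direct sum of two
infinite-dimensional closed subspaces. -/
def Decomposable (E : Type*) [SeminormedAddCommGroup E] [NormedSpace ℝ E] : Prop :=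
  ∃ U V : Submodule ℝ E, IsClosed (U : Set E) ∧ IsClosed (V : Set E) ∧
    ¬FiniteDimensional ℝ U ∧ ¬FiniteDimensional ℝ V ∧ U ⊔ V = ⊤ ∧ IsTopDirectSum U V

/-- Hereditarily indecomposable space. -/
def IsHI (E : Type*) [SeminormedAddCommGroup E] [NormedSpace ℝ E] : Prop :=
  ¬FiniteDimensional ℝ E ∧
    ∀ Y : Submodule ℝ E, IsClosed (Y : Set E) → ¬ Decomposable ↥Y

/-- If there is a uniform bound `‖y‖ ≤ C‖y+z‖`, the angle is positive. -/
lemma subAngle_ne_zero_of_bound {E : Type*} [NormedAddCommGroup E] [NormedSpace ℝ E]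
    (Y Z : Submodule ℝ E) (C : ℝ) (hC : 0 ≤ C)
    (h : ∀ y ∈ Y, ∀ z ∈ Z, ‖y‖ ≤ C * ‖y + z‖) : subAngle Y Z ≠ 0 := by
  have hpos : (0:ℝ) < 3 + 2 * C := by linarith
  have hlb : ENNReal.ofReal (1 / (3 + 2 * C)) ≤ subAngle Y Z := by
    refine le_iInf fun y => le_iInf fun z => le_iInf fun hyz => ?_
    have hb : (0:ℝ) < ‖(y : E) + z‖ := norm_pos_iff.mpr hyz
    have ha : (0:ℝ) ≤ ‖(y : E) - z‖ := norm_nonneg _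
    -- ‖y‖ ≤ C * ‖y - z‖
    have h1 : ‖(y : E)‖ ≤ C * ‖(y : E) - z‖ := by
      have := h (y : E) y.2 (-(z : E)) (Z.neg_mem z.2)
      simpa [sub_eq_add_neg] using this
    have h2 : ‖(z : E)‖ ≤ (1 + C) * ‖(y : E) - z‖ := by
      have : ‖(z : E)‖ ≤ ‖(z : E) - y‖ + ‖(y : E)‖ := by
        simpa using norm_sub_le_norm_sub_add_norm_sub (z : E) (y : E) 0
      have hzy : ‖(z : E) - y‖ = ‖(y : E) - z‖ := norm_sub_rev _ _
      nlinarith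
    have h3 : ‖(y : E) + z‖ ≤ (3 + 2 * C) * ‖(y : E) - z‖ := by
      have : ‖(y : E) + z‖ ≤ ‖(y : E) - z‖ + 2 * ‖(z : E)‖ := by
        calc ‖(y : E) + z‖ = ‖((y : E) - z) + (2 : ℝ) • (z : E)‖ := by
              congr 1; rw [two_smul]; abel
          _ ≤ ‖(y : E) - z‖ + ‖(2:ℝ) • (z : E)‖ := norm_add_le _ _
          _ = ‖(y : E) - z‖ + 2 * ‖(z : E)‖ := by
              rw [norm_smul]; simp
      nlinarith
    have hratio : 1 / (3 + 2 * C) ≤ ‖(y : E) - z‖ / ‖(y : E) + z‖ := by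
      rw [div_le_div_iff₀ hpos hb]
      linarith
    calc ENNReal.ofReal (1 / (3 + 2 * C)) ≤ ENNReal.ofReal (‖(y : E) - z‖ / ‖(y : E) + z‖) :=
          ENNReal.ofReal_le_ofReal hratio
      _ = ENNReal.ofReal ‖(y : E) - z‖ / ENNReal.ofReal ‖(y : E) + z‖ :=
          ENNReal.ofReal_div_of_pos hb
  intro h0
  rw [h0, le_zero_iff] at hlb
  exact absurd hlb (by positivity)

/-- An infinite-dimensional Banach space `X` is hereditarily indecomposable if and only if
`a(Y,Z) = 0` for every pair of infinite-dimensional closed subspaces `Y`, `Z` of `X`. -/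
theorem isHI_iff_subAngle_eq_zero (X : Type*) [NormedAddCommGroup X] [NormedSpace ℝ X]
    [CompleteSpace X] (hX : ¬FiniteDimensional ℝ X) :
    IsHI X ↔ ∀ Y Z : Submodule ℝ X, IsClosed (Y : Set X) → IsClosed (Z : Set X) →
      ¬FiniteDimensional ℝ Y → ¬FiniteDimensional ℝ Z → subAngle Y Z = 0 := by
  constructor
  · -- HI ⇒ angles are zero
    rintro ⟨-, hHI⟩ Y Z hYc hZc hYfd hZfd
    by_contra hne
    -- extract a positive lower bound εr
    set a := subAngle Y Z with ha
    have hapos : 0 < a := pos_iff_ne_zero.mpr hne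
    set ε : ℝ≥0∞ := min a 1 with hε
    have hεpos : 0 < ε := lt_min hapos zero_lt_one
    have hεtop : ε ≠ ⊤ := ne_top_of_le_ne_top ENNReal.one_ne_top (min_le_right _ _)
    set εr : ℝ := ε.toReal with hεr
    have hεrpos : 0 < εr := ENNReal.toReal_pos hεpos.ne' hεtop
    -- key inequality
    have key : ∀ y ∈ Y, ∀ z ∈ Z, εr * ‖y + z‖ ≤ ‖y - z‖ := by
      intro y hy z hz
      by_cases hyz : y + z = 0
      · simp [hyz]
      · have hb : (0:ℝ) < ‖y + z‖ := norm_pos_iff.mpr hyz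
        have h1 : a ≤ ENNReal.ofReal ‖y - z‖ / ENNReal.ofReal ‖y + z‖ := by
          rw [ha, subAngle]
          exact iInf_le_of_le ⟨y, hy⟩ (iInf_le_of_le ⟨z, hz⟩ (iInf_le _ hyz))
        have h2 : ε ≤ ENNReal.ofReal (‖y - z‖ / ‖y + z‖) := by
          rw [ENNReal.ofReal_div_of_pos hb]
          exact le_trans (min_le_left _ _) h1
        have h3 : εr ≤ ‖y - z‖ / ‖y + z‖ :=
          ENNReal.toReal_le_of_le_ofReal (by positivity) h2
        calc εr * ‖y + z‖ ≤ (‖y - z‖ / ‖y + z‖) * ‖y + z‖ :=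
              mul_le_mul_of_nonneg_right h3 (norm_nonneg _)
          _ = ‖y - z‖ := by field_simp
    have key2 : ∀ y ∈ Y, ∀ z ∈ Z, εr * ‖y - z‖ ≤ ‖y + z‖ := by
      intro y hy z hz
      have := key y hy (-z) (Z.neg_mem hz)
      simpa [sub_eq_add_neg] using this
    -- the norm bound
    set C : ℝ := (1 + εr⁻¹) / 2 with hCdef
    have hCpos : 0 < C := by positivity
    have bound : ∀ y ∈ Y, ∀ z ∈ Z, ‖y‖ ≤ C * ‖y + z‖ := by
      intro y hy z hz
      have h1 : ‖y - z‖ ≤ εr⁻¹ * ‖y + z‖ := by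
        rw [inv_mul_eq_div, le_div_iff₀ hεrpos, mul_comm]
        exact key2 y hy z hz
      have h2 : 2 * ‖y‖ ≤ ‖y + z‖ + ‖y - z‖ := by
        have : ‖(y + z) + (y - z)‖ ≤ ‖y + z‖ + ‖y - z‖ := norm_add_le _ _
        have he : (y + z) + (y - z) = (2:ℝ) • y := by rw [two_smul]; abel
        rw [he, norm_smul] at this
        simpa using this
      rw [hCdef]
      nlinarith [norm_nonneg (y + z)]
    have boundZ : ∀ y ∈ Y, ∀ z ∈ Z, ‖z‖ ≤ C * ‖y + z‖ := by
      intro y hy z hz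
      have h1 : ‖y - z‖ ≤ εr⁻¹ * ‖y + z‖ := by
        rw [inv_mul_eq_div, le_div_iff₀ hεrpos, mul_comm]
        exact key2 y hy z hz
      have h2 : 2 * ‖z‖ ≤ ‖y + z‖ + ‖y - z‖ := by
        have : ‖(y + z) - (y - z)‖ ≤ ‖y + z‖ + ‖y - z‖ := norm_sub_le _ _
        have he : (y + z) - (y - z) = (2:ℝ) • z := by rw [two_smul]; abel
        rw [he, norm_smul] at this
        simpa using this
      rw [hCdef]
      nlinarith [norm_nonneg (y + z)]
    -- Y ⊓ Z = ⊥
    have hdisj : Y ⊓ Z = ⊥ := by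
      rw [eq_bot_iff]
      rintro x ⟨hxY, hxZ⟩
      have h1 := key x hxY x hxZ
      simp only [sub_self, norm_zero] at h1
      have hx0 : ‖x + x‖ ≤ 0 := by nlinarith
      have : x + x = 0 := norm_le_zero_iff.mp hx0
      have : (2:ℝ) • x = 0 := by rw [two_smul]; exact this
      have hx : x = 0 := by
        have := smul_eq_zero.mp this
        rcases this with h | h
        · norm_num at h
        · exact h
      simp [hx]
    -- S := Y ⊔ Z is closed
    set S : Submodule ℝ X := Y ⊔ Z with hS
    have hYS : Y ≤ S := le_sup_left
    have hZS : Z ≤ S := le_sup_right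
    have hSc : IsClosed (S : Set X) := by
      apply IsSeqClosed.isClosed
      intro x p hx hxp
      choose y hyY z hzZ hxyz using fun n => Submodule.mem_sup.mp (hx n)
      have hxc : CauchySeq x := hxp.cauchySeq
      have hyc : CauchySeq y := by
        rw [Metric.cauchySeq_iff] at hxc ⊢
        intro δ hδ
        obtain ⟨N, hN⟩ := hxc (δ / C) (by positivity)
        refine ⟨N, fun m hm n hn => ?_⟩
        have h1 : ‖y m - y n‖ ≤ C * ‖(y m - y n) + (z m - z n)‖ :=
          bound _ (Y.sub_mem (hyY m) (hyY n)) _ (Z.sub_mem (hzZ m) (hzZ n))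
        have h2 : (y m - y n) + (z m - z n) = x m - x n := by
          rw [← hxyz m, ← hxyz n]; abel
        rw [h2] at h1
        have h3 : ‖x m - x n‖ < δ / C := by
          have := hN m hm n hn
          rwa [dist_eq_norm] at this
        rw [dist_eq_norm]
        calc ‖y m - y n‖ ≤ C * ‖x m - x n‖ := h1
          _ < C * (δ / C) := by exact mul_lt_mul_of_pos_left h3 hCpos
          _ = δ := by field_simp
      obtain ⟨l, hl⟩ := cauchySeq_tendsto_of_complete hyc
      have hlY : l ∈ Y := hYc.mem_of_tendsto hl (Eventually.of_forall hyY)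
      have hz_tendsto : Tendsto (fun n => x n - y n) atTop (𝓝 (p - l)) := hxp.sub hl
      have hplZ : p - l ∈ Z := by
        apply hZc.mem_of_tendsto hz_tendsto
        filter_upwards with n
        have : x n - y n = z n := by rw [← hxyz n]; abel
        rw [this]; exact hzZ n
      exact Submodule.mem_sup.mpr ⟨l, hlY, p - l, hplZ, by abel⟩
    -- build a decomposition of S
    refine hHI S hSc ?_
    set U : Submodule ℝ ↥S := Y.comap S.subtype with hU
    set V : Submodule ℝ ↥S := Z.comap S.subtype with hV
    have hUmem : ∀ u : ↥S, u ∈ U ↔ (u : X) ∈ Y := fun _ => Iff.rfl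
    have hVmem : ∀ u : ↥S, u ∈ V ↔ (u : X) ∈ Z := fun _ => Iff.rfl
    have hsupUV : U ⊔ V = ⊤ := by
      rw [eq_top_iff]
      rintro ⟨w, hw⟩ -
      obtain ⟨yy, hyy, zz, hzz, hsum⟩ := Submodule.mem_sup.mp hw
      refine Submodule.mem_sup.mpr ⟨⟨yy, hYS hyy⟩, hyy, ⟨zz, hZS hzz⟩, hzz, ?_⟩
      exact Subtype.ext hsum
    refine ⟨U, V, ?_, ?_, ?_, ?_, hsupUV, ?_, ?_, C, ?_⟩
    · exact IsClosed.preimage continuous_subtype_val hYc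
    · exact IsClosed.preimage continuous_subtype_val hZc
    · intro hfin
      exact hYfd ((Submodule.comapSubtypeEquivOfLe hYS).finiteDimensional)
    · intro hfin
      exact hZfd ((Submodule.comapSubtypeEquivOfLe hZS).finiteDimensional)
    · -- U ⊓ V = ⊥
      rw [eq_bot_iff]
      rintro u ⟨huY, huZ⟩
      have : (u : X) ∈ Y ⊓ Z := ⟨huY, huZ⟩
      rw [hdisj] at this
      have : (u : X) = 0 := this
      simpa [Submodule.mem_bot] using Subtype.ext this
    · rw [hsupUV]
      simp
    · intro u hu v hv
      have := bound (u : X) hu (v : X) hv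
      simpa using this
  · -- angles zero ⇒ HI
    intro h
    refine ⟨hX, fun Y hYc hdec => ?_⟩
    obtain ⟨U, V, hUc, hVc, hUfd, hVfd, -, -, -, C, hC⟩ := hdec
    haveI : CompleteSpace ↥Y := hYc.completeSpace_coe
    set U' : Submodule ℝ X := U.map Y.subtype with hU'
    set V' : Submodule ℝ X := V.map Y.subtype with hV'
    have hclosed : ∀ (W : Submodule ℝ ↥Y), IsClosed (W : Set ↥Y) →
        IsClosed ((W.map Y.subtype : Submodule ℝ X) : Set X) := by
      intro W hW
      have : ((W.map Y.subtype : Submodule ℝ X) : Set X) = Subtype.val '' (W : Set ↥Y) := by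
        ext x; simp [Submodule.mem_map]
      rw [this]
      exact (hYc.isClosedEmbedding_subtypeVal.isClosedMap) _ hW
    have hU'c : IsClosed ((U' : Submodule ℝ X) : Set X) := hclosed U hUc
    have hV'c : IsClosed ((V' : Submodule ℝ X) : Set X) := hclosed V hVc
    have hU'fd : ¬FiniteDimensional ℝ U' := by
      intro hfin
      exact hUfd ((Submodule.equivMapOfInjective Y.subtype Y.injective_subtype U).symm.finiteDimensional)
    have hV'fd : ¬FiniteDimensional ℝ V' := by
      intro hfin
      exact hVfd ((Submodule.equivMapOfInjective Y.subtype Y.injective_subtype V).symm.finiteDimensional)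
    have hzero := h U' V' hU'c hV'c hU'fd hV'fd
    refine subAngle_ne_zero_of_bound U' V' (max C 0) (le_max_right _ _) ?_ hzero
    rintro _ ⟨u, hu, rfl⟩ _ ⟨v, hv, rfl⟩
    have h1 : ‖u‖ ≤ C * ‖u + v‖ := hC u hu v hv
    have h2 : C * ‖u + v‖ ≤ max C 0 * ‖u + v‖ :=
      mul_le_mul_of_nonneg_right (le_max_left _ _) (norm_nonneg _)
    have hnorm : ‖(Y.subtype u : X)‖ = ‖u‖ := rfl
    have hnorm2 : ‖(Y.subtype u : X) + (Y.subtype v : X)‖ = ‖u + v‖ := rfl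
    rw [hnorm, hnorm2]
    linarith

end
end

section
/- Let X be a Banach space and let W, Y, Z be closed subspaces of X with W ⊆ Y and W ⊆ Z. Then A((W^⊥, Y), (W^⊥, Z)) ≥ a(Y/W, Z/W), where W^⊥ ⊆ X^* is the annihilator of W and Y/W, Z/W are viewed as subspaces of the quotient Banach space X/W with the quotient norm. In particular, if A((W^⊥, Y), (W^⊥, Z)) = 0 then Y/W and Z/W do not form a topological direct sum in X/W. -/
/-!
A functional `f = y^* - z^*` vanishing on `W` has `|f x| ≤ ‖f‖ · ‖x + W‖`, and the conditions
`y^*(z) = z^*(y) = 0` give `y^*(y) - z^*(z) = f(y + z)`. Together with `‖(y - z) + W‖ ≤ ‖y - z‖`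
this bounds each term of `A((W^⊥, Y), (W^⊥, Z))` from below by the term of `a(Y/W, Z/W)` at
`(y + W, z + W)`. On the other hand, a bounded projection `‖u‖ ≤ C ‖u + v‖` gives
`‖u + v‖ ≤ (2C + 1) ‖u - v‖`, so the angle of a topological direct sum is at least `1/(2C + 1)`.
-/

open Filter Topology
open scoped ENNReal

noncomputable section

/-- The annihilator `W^⊥ ⊆ X^*` of a subspace `W ⊆ X` in the topological dual. -/
def dualAnn {E : Type*} [SeminormedAddCommGroup E] [NormedSpace ℝ E]
    (W : Submodule ℝ E) : Submodule ℝ (E →L[ℝ] ℝ) where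
  carrier := {f | ∀ x ∈ W, f x = 0}
  add_mem' := by
    intro f g hf hg x hx
    simp [hf x hx, hg x hx]
  zero_mem' := by intro x hx; simp
  smul_mem' := by
    intro c f hf x hx
    simp [hf x hx]

/-- The angle `A((Y_*,Y),(Z_*,Z))` between two QS-pairs:
`inf ‖y-z‖·‖y^*-z^*‖ / |y^*(y) - z^*(z)|` over `y ∈ Y`, `z ∈ Z`, `y^* ∈ Y_*`, `z^* ∈ Z_*`
with `y ≠ z`, `y^* ≠ z^*`, `y^*(z) = z^*(y) = 0`. -/
def pairAngle {E : Type*} [SeminormedAddCommGroup E] [NormedSpace ℝ E]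
    (Ys : Submodule ℝ (E →L[ℝ] ℝ)) (Y : Submodule ℝ E)
    (Zs : Submodule ℝ (E →L[ℝ] ℝ)) (Z : Submodule ℝ E) : ℝ≥0∞ :=
  ⨅ (y : Y) (z : Z) (ys : Ys) (zs : Zs) (_ : (y : E) ≠ (z : E))
    (_ : (ys : E →L[ℝ] ℝ) ≠ (zs : E →L[ℝ] ℝ))
    (_ : (ys : E →L[ℝ] ℝ) z = 0) (_ : (zs : E →L[ℝ] ℝ) y = 0),
    ENNReal.ofReal (‖(y : E) - (z : E)‖ * ‖(ys : E →L[ℝ] ℝ) - (zs : E →L[ℝ] ℝ)‖) /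
      ENNReal.ofReal |(ys : E →L[ℝ] ℝ) y - (zs : E →L[ℝ] ℝ) z|

section

variable {X : Type*} [NormedAddCommGroup X] [NormedSpace ℝ X]

theorem abs_apply_le_opNorm_mul_norm_mkQ {W : Submodule ℝ X} {f : X →L[ℝ] ℝ}
    (hf : f ∈ dualAnn W) (x : X) : |f x| ≤ ‖f‖ * ‖W.mkQ x‖ := by
  rcases eq_or_ne f 0 with rfl | hf0
  · simp
  replace hf0 := norm_pos_iff.2 hf0
  rw [← div_le_iff₀' hf0]
  refine QuotientAddGroup.le_norm_iff.2 fun m hm => ?_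
  have hmx : f m = f x := by
    have : m - x ∈ W := (Submodule.Quotient.eq W).1 hm
    simpa [sub_eq_zero] using hf _ this
  rw [div_le_iff₀' hf0, ← hmx, ← Real.norm_eq_abs]
  exact f.le_opNorm m

theorem subAngle_map_mkQ_le_pairAngle_dualAnn (W Y Z : Submodule ℝ X) :
    subAngle (Y.map W.mkQ) (Z.map W.mkQ) ≤ pairAngle (dualAnn W) Y (dualAnn W) Z := by
  simp only [pairAngle, le_iInf_iff]
  intro y z ys zs hyz hys hysz hzsy
  set f : X →L[ℝ] ℝ := (ys : X →L[ℝ] ℝ) - zs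
  have hf : f ∈ dualAnn W := sub_mem ys.2 zs.2
  have hf0 : ENNReal.ofReal ‖f‖ ≠ 0 :=
    ENNReal.ofReal_pos.2 (norm_pos_iff.2 (sub_ne_zero.2 hys)) |>.ne'
  have hval : (ys : X →L[ℝ] ℝ) y - (zs : X →L[ℝ] ℝ) z = f (y + z) := by
    simp [f, hysz, hzsy]
  rw [hval]
  by_cases hq : W.mkQ (y + z) = 0
  -- then `f (y + z) = 0` and this term of `pairAngle` is `⊤`
  · have : f (y + z) = 0 := hf _ ((Submodule.Quotient.mk_eq_zero W).1 hq)
    rw [this, abs_zero, ENNReal.ofReal_zero, ENNReal.div_zero]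
    · exact le_top
    · rw [ENNReal.ofReal_mul (norm_nonneg _)]
      exact mul_ne_zero (ENNReal.ofReal_pos.2 (norm_pos_iff.2 (sub_ne_zero.2 hyz))).ne' hf0
  refine iInf₂_le_of_le ⟨W.mkQ y, Submodule.mem_map_of_mem y.2⟩
    ⟨W.mkQ z, Submodule.mem_map_of_mem z.2⟩ (iInf_le_of_le (by simpa using hq) ?_)
  simp only [← map_add, ← map_sub]
  calc ENNReal.ofReal ‖W.mkQ (y - z)‖ / ENNReal.ofReal ‖W.mkQ (y + z)‖
      = ENNReal.ofReal (‖W.mkQ (y - z)‖ * ‖f‖) /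
          ENNReal.ofReal (‖f‖ * ‖W.mkQ (y + z)‖) := by
        rw [ENNReal.ofReal_mul (norm_nonneg _), ENNReal.ofReal_mul (norm_nonneg _),
          mul_comm (ENNReal.ofReal ‖f‖), ENNReal.mul_div_mul_right _ _ hf0 ENNReal.ofReal_ne_top]
    _ ≤ ENNReal.ofReal (‖(y : X) - z‖ * ‖f‖) / ENNReal.ofReal |f (y + z)| :=
        ENNReal.div_le_div
          (ENNReal.ofReal_le_ofReal <|
            mul_le_mul_of_nonneg_right (Submodule.Quotient.norm_mk_le _ _) (norm_nonneg f))
          (ENNReal.ofReal_le_ofReal (abs_apply_le_opNorm_mul_norm_mkQ hf _))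

end

theorem norm_add_le_mul_norm_sub_of_norm_le_mul_norm_add {E : Type*}
    [SeminormedAddCommGroup E] [Module ℝ E] {U V : Submodule ℝ E} {C : ℝ}
    (hC : ∀ u ∈ U, ∀ v ∈ V, ‖u‖ ≤ C * ‖u + v‖) {u v : E} (hu : u ∈ U) (hv : v ∈ V) :
    ‖u + v‖ ≤ (2 * C + 1) * ‖u - v‖ := by
  have hu' : ‖u‖ ≤ C * ‖u - v‖ := by simpa [sub_eq_add_neg] using hC u hu (-v) (neg_mem hv)
  have hv' : ‖v‖ ≤ ‖u‖ + ‖u - v‖ := by simpa using norm_sub_le u (u - v)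
  linarith [norm_add_le u v]

theorem subAngle_pos_of_isTopDirectSum {E : Type*} [NormedAddCommGroup E] [NormedSpace ℝ E]
    {U V : Submodule ℝ E} (h : IsTopDirectSum U V) : 0 < subAngle U V := by
  obtain ⟨-, -, C, hC⟩ := h
  have hC' : ∀ u ∈ U, ∀ v ∈ V, ‖u‖ ≤ max C 0 * ‖u + v‖ := fun u hu v hv =>
    (hC u hu v hv).trans (mul_le_mul_of_nonneg_right (le_max_left C 0) (norm_nonneg _))
  have hK : 0 < 2 * max C 0 + 1 := by positivity
  refine lt_of_lt_of_le (ENNReal.ofReal_pos.2 (one_div_pos.2 hK)) ?_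
  simp only [subAngle, le_iInf_iff]
  intro u v huv
  have huv' : 0 < ‖(u : E) + v‖ := norm_pos_iff.2 huv
  rw [← ENNReal.ofReal_div_of_pos huv']
  refine ENNReal.ofReal_le_ofReal ((div_le_div_iff₀ hK huv').2 ?_)
  linarith [norm_add_le_mul_norm_sub_of_norm_le_mul_norm_add hC' u.2 v.2]

theorem pairAngle_ge_quotient_angle_general (X : Type*) [NormedAddCommGroup X] [NormedSpace ℝ X]
    (W Y Z : Submodule ℝ X)
    (hW : IsClosed (W : Set X)) :
    subAngle (Y.map W.mkQ) (Z.map W.mkQ) ≤ pairAngle (dualAnn W) Y (dualAnn W) Z ∧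
      (pairAngle (dualAnn W) Y (dualAnn W) Z = 0 →
        ¬ IsTopDirectSum (Y.map W.mkQ) (Z.map W.mkQ)) := by
  have hle := subAngle_map_mkQ_le_pairAngle_dualAnn W Y Z
  refine ⟨hle, fun h0 hsum => ?_⟩
  -- makes `X ⧸ W` a normed, not merely seminormed, space
  have : IsClosed (W : Set X) := hW
  exact (subAngle_pos_of_isTopDirectSum hsum).ne' (le_antisymm (hle.trans h0.le) bot_le)

/-- For closed subspaces `W ⊆ Y` and `W ⊆ Z` of a Banach space `X`,
`A((W^⊥, Y), (W^⊥, Z)) ≥ a(Y/W, Z/W)`, where `Y/W` and `Z/W` are viewed as subspaces of the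
quotient `X/W`. In particular, if `A((W^⊥, Y), (W^⊥, Z)) = 0` then `Y/W` and `Z/W` do not form
a topological direct sum in `X/W`. -/
theorem pairAngle_ge_quotient_angle (X : Type*) [NormedAddCommGroup X] [NormedSpace ℝ X]
    [CompleteSpace X] (W Y Z : Submodule ℝ X)
    (hW : IsClosed (W : Set X)) (hY : IsClosed (Y : Set X)) (hZ : IsClosed (Z : Set X))
    (hWY : W ≤ Y) (hWZ : W ≤ Z) :
    subAngle (Y.map W.mkQ) (Z.map W.mkQ) ≤ pairAngle (dualAnn W) Y (dualAnn W) Z ∧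
      (pairAngle (dualAnn W) Y (dualAnn W) Z = 0 →
        ¬ IsTopDirectSum (Y.map W.mkQ) (Z.map W.mkQ)) :=
  pairAngle_ge_quotient_angle_general X W Y Z hW
end
end

section
/- Let X be a Banach space with a shrinking finite-dimensional decomposition such that X^*, equipped with the dual finite-dimensional decomposition, has the restricted QHI property. Then X has the restricted QHI property. -/
open Filter Topology

noncomputable section

/-- A finite-dimensional decomposition (FDD) of a Banach space: a sequence of nonzero
finite-dimensional subspaces such that every vector has a unique norm-convergent
expansion `x = Σ b n` with `b n ∈ B n`. -/
def IsFDD {E : Type*} [SeminormedAddCommGroup E] [NormedSpace ℝ E]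
    (B : ℕ → Submodule ℝ E) : Prop :=
  (∀ n, B n ≠ ⊥) ∧ (∀ n, FiniteDimensional ℝ (B n)) ∧
    ∀ x : E, ∃! b : (n : ℕ) → B n,
      Tendsto (fun N => ∑ n ∈ Finset.range N, ((b n : E))) atTop (𝓝 x)

/-- A successive partition of `ℕ` into intervals, encoded by its sequence of left endpoints:
the `n`-th interval is `[k n, k (n+1))`. -/
def SuccPartition (k : ℕ → ℕ) : Prop :=
  StrictMono k ∧ k 0 = 0

/-- An FDD-block subspace of a space with FDD `B`: the closed span of a sequence of
finitely supported (possibly zero) subspaces `F n` with `ran (F n) ⊆ E n` for some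
successive partition. -/
def IsFDDBlockSubspace {E : Type*} [SeminormedAddCommGroup E] [NormedSpace ℝ E]
    (B : ℕ → Submodule ℝ E) (Y : Submodule ℝ E) : Prop :=
  ∃ k : ℕ → ℕ, SuccPartition k ∧ ∃ F : ℕ → Submodule ℝ E,
    (∀ n, F n ≤ ⨆ i ∈ Finset.Ico (k n) (k (n + 1)), B i) ∧
    Y = (⨆ n, F n).topologicalClosure

/-- The FDD-block quotient of subspace `Σ F n / Σ G n`, as a quotient Banach space. -/
abbrev fddQS {E : Type*} [SeminormedAddCommGroup E] [NormedSpace ℝ E]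
    (F G : ℕ → Submodule ℝ E) : Type _ :=
  ↥((⨆ n, F n).topologicalClosure) ⧸
    (((⨆ n, G n).topologicalClosure).comap ((⨆ n, F n).topologicalClosure).subtype)

/-- The restricted QHI property of a space with FDD `B`: no infinite-dimensional
FDD-block quotient of subspace is decomposable. -/
def RestrictedQHI {E : Type*} [SeminormedAddCommGroup E] [NormedSpace ℝ E]
    (B : ℕ → Submodule ℝ E) : Prop :=
  ∀ k : ℕ → ℕ, SuccPartition k →
    ∀ F G : ℕ → Submodule ℝ E, (∀ n, G n ≤ F n) →
      (∀ n, F n ≤ ⨆ i ∈ Finset.Ico (k n) (k (n + 1)), B i) →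
      ¬FiniteDimensional ℝ (fddQS F G) → ¬ Decomposable (fddQS F G)

end

noncomputable section

/-- The dual FDD: `B*_n` is the space of functionals supported on `B n`, i.e. the
annihilator of the span of the `B m`, `m ≠ n`. -/
def dualFDD {E : Type*} [SeminormedAddCommGroup E] [NormedSpace ℝ E]
    (B : ℕ → Submodule ℝ E) : ℕ → Submodule ℝ (E →L[ℝ] ℝ) :=
  fun n => dualAnn (⨆ m ∈ {m : ℕ | m ≠ n}, B m)

/-- The FDD `B` is shrinking: the closed linear span of the coordinate functionals,
i.e. of the dual FDD spaces, is the whole dual. -/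
def IsShrinkingFDD {E : Type*} [SeminormedAddCommGroup E] [NormedSpace ℝ E]
    (B : ℕ → Submodule ℝ E) : Prop :=
  (⨆ n, dualFDD B n).topologicalClosure = ⊤

namespace RQHIAux
set_option linter.unusedSectionVars false

open Filter Topology Finset

variable {X : Type*} [NormedAddCommGroup X] [NormedSpace ℝ X] [CompleteSpace X]
  {B : ℕ → Submodule ℝ X}

/-- The coordinates of `x` relative to the FDD `B`. -/
def coord (hB : IsFDD B) (x : X) : ∀ n, B n := (hB.2.2 x).choose

lemma tendsto_coord (hB : IsFDD B) (x : X) :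
    Tendsto (fun N => ∑ n ∈ Finset.range N, ((coord hB x n : X))) atTop (𝓝 x) :=
  (hB.2.2 x).choose_spec.1

lemma coord_unique (hB : IsFDD B) (x : X) (b : ∀ n, B n)
    (h : Tendsto (fun N => ∑ n ∈ Finset.range N, ((b n : X))) atTop (𝓝 x)) :
    b = coord hB x :=
  (hB.2.2 x).choose_spec.2 b h

lemma coord_add (hB : IsFDD B) (x y : X) :
    coord hB (x + y) = fun n => coord hB x n + coord hB y n := by
  refine (coord_unique hB (x + y) _ ?_).symm
  have := (tendsto_coord hB x).add (tendsto_coord hB y)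
  simpa [← Finset.sum_add_distrib] using this

lemma coord_smul (hB : IsFDD B) (c : ℝ) (x : X) :
    coord hB (c • x) = fun n => c • coord hB x n := by
  refine (coord_unique hB (c • x) _ ?_).symm
  have := (tendsto_coord hB x).const_smul c
  simpa [Finset.smul_sum] using this

/-- The `m`-th partial sum operator of the FDD, as a linear map. -/
def Slin (hB : IsFDD B) (m : ℕ) : X →ₗ[ℝ] X where
  toFun x := ∑ n ∈ Finset.range m, ((coord hB x n : X))
  map_add' x y := by simp [coord_add hB x y, Finset.sum_add_distrib]
  map_smul' c x := by simp [coord_smul hB c x, Finset.smul_sum]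

lemma Slin_apply (hB : IsFDD B) (m : ℕ) (x : X) :
    Slin hB m x = ∑ n ∈ Finset.range m, ((coord hB x n : X)) := rfl

lemma tendsto_Slin (hB : IsFDD B) (x : X) :
    Tendsto (fun m => Slin hB m x) atTop (𝓝 x) := tendsto_coord hB x

lemma Slin_zero (hB : IsFDD B) (x : X) : Slin hB 0 x = 0 := by
  simp [Slin_apply]

/-- Coordinates of a finitely supported sum. -/
lemma coord_finsupp (hB : IsFDD B) (c : ∀ n, B n) (m : ℕ) (hc : ∀ n, m ≤ n → c n = 0) :
    coord hB (∑ n ∈ Finset.range m, ((c n : X))) = c := by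
  refine (coord_unique hB _ c ?_).symm
  have hev : ∀ N, m ≤ N →
      (∑ n ∈ Finset.range N, ((c n : X))) = ∑ n ∈ Finset.range m, ((c n : X)) := by
    intro N hN
    rw [← Finset.sum_range_add_sum_Ico _ hN]
    have : ∑ n ∈ Finset.Ico m N, ((c n : X)) = 0 := by
      refine Finset.sum_eq_zero fun n hn => ?_
      rw [hc n (Finset.mem_Ico.1 hn).1]; rfl
    rw [this, add_zero]
  have : (fun N => ∑ n ∈ Finset.range N, ((c n : X))) =ᶠ[atTop]
      (fun _ => ∑ n ∈ Finset.range m, ((c n : X))) :=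
    Filter.eventually_atTop.2 ⟨m, hev⟩
  exact Tendsto.congr' this.symm tendsto_const_nhds

lemma coord_single (hB : IsFDD B) (j : ℕ) (x : X) (hx : x ∈ B j) :
    coord hB x = Pi.single (M := fun n => (B n : Type _)) j ⟨x, hx⟩ := by
  refine (coord_unique hB x _ ?_).symm
  have hev : ∀ N, j + 1 ≤ N →
      (∑ n ∈ Finset.range N, ((Pi.single (M := fun n => (B n : Type _)) j ⟨x, hx⟩ n : X))) = x := by
    intro N hN
    rw [Finset.sum_eq_single j]
    · simp
    · intro n _ hn; rw [Pi.single_eq_of_ne hn]; rfl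
    · intro hj; exact absurd (Finset.mem_range.2 hN) hj
  have h2 : (fun N => ∑ n ∈ Finset.range N, ((Pi.single (M := fun n => (B n : Type _)) j ⟨x, hx⟩ n : X))) =ᶠ[atTop] (fun _ => x) :=
    Filter.eventually_atTop.2 ⟨j+1, hev⟩
  exact Tendsto.congr' h2.symm tendsto_const_nhds

lemma Slin_single (hB : IsFDD B) (j : ℕ) (x : X) (hx : x ∈ B j) (m : ℕ) :
    Slin hB m x = if j < m then x else 0 := by
  rw [Slin_apply]
  rcases lt_or_ge j m with h | h
  · rw [if_pos h, Finset.sum_eq_single j]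
    · rw [coord_single hB j x hx]; simp
    · intro n _ hn
      rw [coord_single hB j x hx, Pi.single_eq_of_ne hn]; rfl
    · intro hj; exact absurd (Finset.mem_range.2 h) hj
  · rw [if_neg (not_lt.2 h)]
    refine Finset.sum_eq_zero fun n hn => ?_
    rw [coord_single hB j x hx, Pi.single_eq_of_ne]
    · rfl
    · exact Nat.ne_of_lt (lt_of_lt_of_le (Finset.mem_range.1 hn) h)

/-- On a block `⨆ i ∈ Finset.Ico a b, B i`, the partial sum `Slin m` acts as the
identity when `b ≤ m`. -/
lemma Slin_eq_self_on_block (hB : IsFDD B) (a b m : ℕ) (hm : b ≤ m) :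
    (⨆ i ∈ Finset.Ico a b, B i) ≤ LinearMap.eqLocus (Slin hB m) LinearMap.id := by
  refine iSup₂_le fun i hi => fun x hx => ?_
  have : Slin hB m x = x := by
    rw [Slin_single hB i x hx, if_pos]
    exact lt_of_lt_of_le (Finset.mem_Ico.1 hi).2 hm
  simpa [LinearMap.mem_eqLocus] using this

/-- On a block `⨆ i ∈ Finset.Ico a b, B i`, the partial sum `Slin m` vanishes
when `m ≤ a`. -/
lemma Slin_eq_zero_on_block (hB : IsFDD B) (a b m : ℕ) (hm : m ≤ a) :
    (⨆ i ∈ Finset.Ico a b, B i) ≤ LinearMap.ker (Slin hB m) := by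
  refine iSup₂_le fun i hi => fun x hx => ?_
  have : Slin hB m x = 0 := by
    rw [Slin_single hB i x hx, if_neg]
    exact not_lt.2 (le_trans hm (Finset.mem_Ico.1 hi).1)
  simpa [LinearMap.mem_ker] using this

end RQHIAux
namespace RQHIAux
set_option linter.unusedSectionVars false
open Filter Topology Finset

variable {X : Type*} [NormedAddCommGroup X] [NormedSpace ℝ X] [CompleteSpace X]
  {B : ℕ → Submodule ℝ X}

lemma Slin_bdd (hB : IsFDD B) (x : X) : ∃ C : ℝ, ∀ m, ‖Slin hB m x‖ ≤ C := by
  obtain ⟨R, -, hR⟩ := cauchySeq_bdd (tendsto_Slin hB x).cauchySeq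
  refine ⟨R, fun m => ?_⟩
  have := hR m 0
  rw [Slin_zero hB x, dist_zero_right] at this
  exact this.le

/-- `x ↦ (m ↦ Slin m x)` as a linear map into bounded sequences. -/
def Jmap (hB : IsFDD B) : X →ₗ[ℝ] BoundedContinuousFunction ℕ X where
  toFun x := BoundedContinuousFunction.ofNormedAddCommGroup (fun m => Slin hB m x)
    continuous_of_discreteTopology (Slin_bdd hB x).choose (Slin_bdd hB x).choose_spec
  map_add' x y := by
    ext m
    simp [BoundedContinuousFunction.coe_ofNormedAddCommGroup, map_add]
  map_smul' c x := by
    ext m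
    simp [BoundedContinuousFunction.coe_ofNormedAddCommGroup, map_smul]

lemma Jmap_apply (hB : IsFDD B) (x : X) (m : ℕ) : Jmap hB x m = Slin hB m x := rfl

lemma norm_le_norm_Jmap (hB : IsFDD B) (x : X) : ‖x‖ ≤ ‖Jmap hB x‖ := by
  have h1 : Tendsto (fun m => ‖Slin hB m x‖) atTop (𝓝 ‖x‖) :=
    (tendsto_Slin hB x).norm
  refine le_of_tendsto h1 (Filter.Eventually.of_forall fun m => ?_)
  have := (Jmap hB x).norm_coe_le_norm m
  rwa [Jmap_apply] at this

lemma Jmap_injective (hB : IsFDD B) : Function.Injective (Jmap hB) := by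
  intro x y h
  have : ‖x - y‖ ≤ ‖Jmap hB (x - y)‖ := norm_le_norm_Jmap hB _
  rw [map_sub, h, sub_self, norm_zero] at this
  have h0 := le_antisymm this (norm_nonneg _)
  exact sub_eq_zero.1 (norm_eq_zero.1 h0)

lemma range_Jmap_closed (hB : IsFDD B) :
    IsClosed ((LinearMap.range (Jmap hB) : Submodule ℝ (BoundedContinuousFunction ℕ X)) :
      Set (BoundedContinuousFunction ℕ X)) := by
  rw [← isSeqClosed_iff_isClosed]
  intro u g hu hg
  choose x hx using fun j => LinearMap.mem_range.1 (hu j)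
  -- `x j` is Cauchy
  have hdist : ∀ i j, dist (x i) (x j) ≤ dist (u i) (u j) := by
    intro i j
    rw [dist_eq_norm, dist_eq_norm]
    have := norm_le_norm_Jmap hB (x i - x j)
    rwa [map_sub, hx i, hx j] at this
  have hcx : CauchySeq x := by
    rw [Metric.cauchySeq_iff]
    intro ε hε
    obtain ⟨N, hN⟩ := Metric.cauchySeq_iff.1 hg.cauchySeq ε hε
    exact ⟨N, fun i hi j hj => lt_of_le_of_lt (hdist i j) (hN i hi j hj)⟩
  obtain ⟨xl, hxl⟩ := cauchySeq_tendsto_of_complete hcx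
  -- pointwise convergence of the partial sums
  have hpt : ∀ m, Tendsto (fun j => Slin hB m (x j)) atTop (𝓝 (g m)) := by
    intro m
    rw [tendsto_iff_dist_tendsto_zero]
    refine squeeze_zero (fun j => dist_nonneg) (fun j => ?_)
      (tendsto_iff_dist_tendsto_zero.1 hg)
    calc dist (Slin hB m (x j)) (g m) = dist ((u j) m) (g m) := by rw [← hx j]; rfl
      _ ≤ dist (u j) g := BoundedContinuousFunction.dist_coe_le_dist m
  have hβ : ∀ m, g (m + 1) - g m ∈ B m := by
    intro m
    have hcl : IsClosed ((B m : Set X)) :=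
      haveI := hB.2.1 m
      (B m).closed_of_finiteDimensional
    refine hcl.mem_of_tendsto ((hpt (m + 1)).sub (hpt m))
      (Filter.Eventually.of_forall fun j => ?_)
    have : Slin hB (m + 1) (x j) - Slin hB m (x j) = ((coord hB (x j) m : X)) := by
      rw [Slin_apply, Slin_apply, Finset.sum_range_succ, add_sub_cancel_left]
    rw [this]
    exact (coord hB (x j) m).2
  have hg0 : g 0 = 0 := by
    have h0 : Tendsto (fun j => Slin hB 0 (x j)) atTop (𝓝 (0 : X)) := by
      simpa [Slin_zero] using tendsto_const_nhds (α := X) (f := atTop (α := ℕ))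
    exact tendsto_nhds_unique (hpt 0) h0
  have hsum : ∀ N, ∑ n ∈ Finset.range N, (g (n + 1) - g n) = g N := by
    intro N
    rw [Finset.sum_range_sub (f := fun n => g n), hg0, sub_zero]
  -- `g N` converges to `xl`
  have hgt : Tendsto (fun N => g N) atTop (𝓝 xl) := by
    rw [Metric.tendsto_atTop]
    intro ε hε
    have hε3 : 0 < ε / 3 := by linarith
    obtain ⟨j, hj1, hj2⟩ : ∃ j, dist (u j) g < ε / 3 ∧ dist (x j) xl < ε / 3 := by
      obtain ⟨j1, hj1⟩ := (Metric.tendsto_atTop.1 hg (ε / 3) hε3)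
      obtain ⟨j2, hj2⟩ := (Metric.tendsto_atTop.1 hxl (ε / 3) hε3)
      exact ⟨max j1 j2, hj1 _ (le_max_left _ _), hj2 _ (le_max_right _ _)⟩
    obtain ⟨N0, hN0⟩ := Metric.tendsto_atTop.1 (tendsto_Slin hB (x j)) (ε / 3) hε3
    refine ⟨N0, fun N hN => ?_⟩
    have d1 : dist (g N) (Slin hB N (x j)) ≤ ε / 3 := by
      calc dist (g N) (Slin hB N (x j)) = dist (g N) ((u j) N) := by rw [← hx j]; rfl
        _ ≤ dist g (u j) := BoundedContinuousFunction.dist_coe_le_dist N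
        _ ≤ ε / 3 := by rw [dist_comm]; exact hj1.le
    calc dist (g N) xl ≤ dist (g N) (Slin hB N (x j)) + dist (Slin hB N (x j)) (x j)
        + dist (x j) xl := dist_triangle4 _ _ _ _
      _ < ε / 3 + ε / 3 + ε / 3 := by
          have := hN0 N hN
          refine add_lt_add_of_lt_of_lt (add_lt_add_of_le_of_lt d1 this) hj2
      _ = ε := by ring
  -- identify the coordinates of `xl`
  have hc : (fun n => (⟨g (n + 1) - g n, hβ n⟩ : B n)) = coord hB xl := by
    refine coord_unique hB xl _ ?_
    have : (fun N => ∑ n ∈ Finset.range N, ((((⟨g (n + 1) - g n, hβ n⟩ : B n)) : X))) =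
        fun N => g N := by
      funext N; exact hsum N
    rw [this]; exact hgt
  refine ⟨xl, ?_⟩
  ext m
  rw [Jmap_apply, Slin_apply, ← hc]
  exact hsum m

/-- The uniform bound on the FDD partial sum operators (principle of uniform boundedness
via the Banach isomorphism theorem). -/
lemma exists_fdd_bound (hB : IsFDD B) : ∃ K : ℝ, 1 ≤ K ∧ ∀ m x, ‖Slin hB m x‖ ≤ K * ‖x‖ := by
  set Y := LinearMap.range (Jmap hB) with hY
  haveI : CompleteSpace Y := (range_Jmap_closed hB).completeSpace_coe
  let e : X ≃ₗ[ℝ] Y := LinearEquiv.ofInjective (Jmap hB) (Jmap_injective hB)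
  have hbnd : ∀ y : Y, ‖e.symm y‖ ≤ 1 * ‖y‖ := by
    intro y
    have h1 : e (e.symm y) = y := e.apply_symm_apply y
    have h2 : ‖e.symm y‖ ≤ ‖Jmap hB (e.symm y)‖ := norm_le_norm_Jmap hB _
    have h3 : (e (e.symm y) : BoundedContinuousFunction ℕ X) = Jmap hB (e.symm y) := rfl
    rw [one_mul]
    calc ‖e.symm y‖ ≤ ‖Jmap hB (e.symm y)‖ := h2
      _ = ‖((e (e.symm y) : Y) : BoundedContinuousFunction ℕ X)‖ := by rw [h3]
      _ = ‖((y : Y) : BoundedContinuousFunction ℕ X)‖ := by rw [h1]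
      _ = ‖y‖ := rfl
  have hcont : Continuous e.symm :=
    AddMonoidHomClass.continuous_of_bound (e.symm : Y →ₗ[ℝ] X) 1 hbnd
  let E : Y ≃L[ℝ] X := e.symm.toContinuousLinearEquivOfContinuous hcont
  refine ⟨‖(E.symm : X →L[ℝ] Y)‖ + 1, by linarith [norm_nonneg (E.symm : X →L[ℝ] Y)], fun m x => ?_⟩
  have h1 : ‖Slin hB m x‖ ≤ ‖Jmap hB x‖ := by
    have := (Jmap hB x).norm_coe_le_norm m
    rwa [Jmap_apply] at this
  have h2 : (E.symm x : BoundedContinuousFunction ℕ X) = Jmap hB x := by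
    have : E.symm x = e x := by
      have := LinearEquiv.coeFn_toContinuousLinearEquivOfContinuous_symm e.symm hcont
      rw [show E.symm = (e.symm.toContinuousLinearEquivOfContinuous hcont).symm from rfl]
      rw [this]; simp
    rw [this]; rfl
  have h3 : ‖Jmap hB x‖ = ‖E.symm x‖ := by rw [← h2]; rfl
  have h4 : ‖E.symm x‖ ≤ ‖(E.symm : X →L[ℝ] Y)‖ * ‖x‖ :=
    (E.symm : X →L[ℝ] Y).le_opNorm x
  calc ‖Slin hB m x‖ ≤ ‖Jmap hB x‖ := h1
    _ = ‖E.symm x‖ := h3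
    _ ≤ ‖(E.symm : X →L[ℝ] Y)‖ * ‖x‖ := h4
    _ ≤ (‖(E.symm : X →L[ℝ] Y)‖ + 1) * ‖x‖ := by
        have := norm_nonneg x; nlinarith [norm_nonneg (E.symm : X →L[ℝ] Y)]

/-- The FDD constant. -/
def fddConst (hB : IsFDD B) : ℝ := (exists_fdd_bound hB).choose

lemma one_le_fddConst (hB : IsFDD B) : 1 ≤ fddConst hB := (exists_fdd_bound hB).choose_spec.1

lemma fddConst_nonneg (hB : IsFDD B) : 0 ≤ fddConst hB :=
  le_trans zero_le_one (one_le_fddConst hB)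

lemma norm_Slin_le (hB : IsFDD B) (m : ℕ) (x : X) :
    ‖Slin hB m x‖ ≤ fddConst hB * ‖x‖ := (exists_fdd_bound hB).choose_spec.2 m x

/-- The `m`-th FDD projection, as a continuous linear map. -/
def P (hB : IsFDD B) (m : ℕ) : X →L[ℝ] X :=
  LinearMap.mkContinuous (Slin hB m) (fddConst hB) (norm_Slin_le hB m)

lemma P_apply (hB : IsFDD B) (m : ℕ) (x : X) : P hB m x = Slin hB m x := rfl

lemma norm_P_le (hB : IsFDD B) (m : ℕ) : ‖P hB m‖ ≤ fddConst hB :=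
  LinearMap.mkContinuous_norm_le _ (fddConst_nonneg hB) _

end RQHIAux
namespace RQHIAux
set_option linter.unusedSectionVars false
set_option maxHeartbeats 1000000
open Filter Topology Finset

variable {X : Type*} [NormedAddCommGroup X] [NormedSpace ℝ X] [CompleteSpace X]
  {B : ℕ → Submodule ℝ X}

lemma mem_dualAnn {W : Submodule ℝ X} {f : X →L[ℝ] ℝ} :
    f ∈ dualAnn W ↔ ∀ x ∈ W, f x = 0 := Iff.rfl

lemma dualAnn_antitone {W W' : Submodule ℝ X} (h : W ≤ W') : dualAnn W' ≤ dualAnn W :=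
  fun _ hf x hx => hf x (h hx)

lemma dualAnn_apply_of_mem_closure {W : Submodule ℝ X} {f : X →L[ℝ] ℝ}
    (hf : f ∈ dualAnn W) {x : X} (hx : x ∈ closure (W : Set X)) : f x = 0 := by
  have hsub : (W : Set X) ⊆ (f ⁻¹' {0}) := fun y hy => hf y hy
  have := closure_minimal hsub (IsClosed.preimage f.continuous isClosed_singleton) hx
  simpa using this

lemma isClosed_dualAnn (W : Submodule ℝ X) : IsClosed ((dualAnn W : Set (X →L[ℝ] ℝ))) := by
  have : (dualAnn W : Set (X →L[ℝ] ℝ)) = ⋂ x ∈ (W : Set X), {f : X →L[ℝ] ℝ | f x = 0} := by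
    ext f; simp [mem_dualAnn]
  rw [this]
  refine isClosed_biInter fun x _ => isClosed_eq ?_ continuous_const
  exact (ContinuousLinearMap.apply ℝ ℝ x).continuous

lemma P_zero_comp (hB : IsFDD B) (f : X →L[ℝ] ℝ) : f.comp (P hB 0) = 0 := by
  ext x
  simp [P_apply, Slin_zero hB x]

/-- Functionals in `dualFDD B i` vanish on all coordinates `≠ i`. -/
lemma dualFDD_apply_coord {i n : ℕ} {g : X →L[ℝ] ℝ} (hg : g ∈ dualFDD B i)
    (hn : n ≠ i) {y : X} (hy : y ∈ B n) : g y = 0 :=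
  hg y (le_iSup₂ (f := fun m (_ : m ∈ {m : ℕ | m ≠ i}) => B m) n hn hy)

lemma dualFDD_eval (hB : IsFDD B) {i : ℕ} {g : X →L[ℝ] ℝ} (hg : g ∈ dualFDD B i) (x : X) :
    g x = g ((coord hB x i : X)) := by
  have hev : ∀ N, i + 1 ≤ N → g (Slin hB N x) = g ((coord hB x i : X)) := by
    intro N hN
    rw [Slin_apply, map_sum, Finset.sum_eq_single i]
    · intro n _ hn; exact dualFDD_apply_coord hg hn (coord hB x n).2
    · intro hi; exact absurd (Finset.mem_range.2 hN) hi
  have h1 : Tendsto (fun N => g (Slin hB N x)) atTop (𝓝 (g x)) :=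
    (g.continuous.tendsto x).comp (tendsto_Slin hB x)
  have h2 : (fun N => g (Slin hB N x)) =ᶠ[atTop] (fun _ => g ((coord hB x i : X))) :=
    Filter.eventually_atTop.2 ⟨i + 1, hev⟩
  exact tendsto_nhds_unique (Tendsto.congr' h2 h1) tendsto_const_nhds

lemma dualFDD_comp_P {i m : ℕ} (hB : IsFDD B) {g : X →L[ℝ] ℝ} (hg : g ∈ dualFDD B i)
    (hm : i < m) : g.comp (P hB m) = g := by
  ext x
  have h1 : g (Slin hB m x) = g ((coord hB x i : X)) := by
    rw [Slin_apply, map_sum, Finset.sum_eq_single i]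
    · intro n _ hn; exact dualFDD_apply_coord hg hn (coord hB x n).2
    · intro hi; exact absurd (Finset.mem_range.2 hm) hi
  rw [ContinuousLinearMap.comp_apply, P_apply, h1, ← dualFDD_eval hB hg x]

/-- The set of functionals `f` with `f ∘ P m = f` eventually, as a submodule. -/
def eventuallyFixed (hB : IsFDD B) : Submodule ℝ (X →L[ℝ] ℝ) where
  carrier := {f | ∃ m₀, ∀ m, m₀ ≤ m → f.comp (P hB m) = f}
  add_mem' := by
    rintro f g ⟨mf, hf⟩ ⟨mg, hg⟩
    exact ⟨max mf mg, fun m hm => by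
      rw [ContinuousLinearMap.add_comp, hf m (le_trans (le_max_left _ _) hm),
        hg m (le_trans (le_max_right _ _) hm)]⟩
  zero_mem' := ⟨0, fun m _ => by rw [ContinuousLinearMap.zero_comp]⟩
  smul_mem' := by
    rintro c f ⟨mf, hf⟩
    exact ⟨mf, fun m hm => by rw [ContinuousLinearMap.smul_comp, hf m hm]⟩

lemma exists_comp_P_eq (hB : IsFDD B) {f : X →L[ℝ] ℝ} (hf : f ∈ ⨆ n, dualFDD B n) :
    ∃ m₀, ∀ m, m₀ ≤ m → f.comp (P hB m) = f := by
  have : (⨆ n, dualFDD B n) ≤ eventuallyFixed hB := by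
    refine iSup_le fun i => fun g hg => ?_
    exact ⟨i + 1, fun m hm => dualFDD_comp_P hB hg hm⟩
  exact this hf

/-- For a shrinking FDD, the adjoints of the partial sum projections converge pointwise
in norm on the dual. -/
lemma tendsto_comp_P (hB : IsFDD B) (hshr : IsShrinkingFDD B) (f : X →L[ℝ] ℝ) :
    Tendsto (fun m => f.comp (P hB m)) atTop (𝓝 f) := by
  rw [Metric.tendsto_atTop]
  intro ε hε
  set K := fddConst hB with hK
  have hK1 : 1 ≤ K := one_le_fddConst hB
  have hεK : 0 < ε / (2 * (K + 1)) := by positivity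
  have hfmem : f ∈ closure ((⨆ n, dualFDD B n : Submodule ℝ (X →L[ℝ] ℝ)) :
      Set (X →L[ℝ] ℝ)) := by
    rw [← Submodule.topologicalClosure_coe, hshr]
    trivial
  obtain ⟨h, hh, hdist⟩ := Metric.mem_closure_iff.1 hfmem _ hεK
  obtain ⟨m₀, hm₀⟩ := exists_comp_P_eq hB hh
  refine ⟨m₀, fun m hm => ?_⟩
  have h1 : f.comp (P hB m) - f = (f - h).comp (P hB m) + (h - f) := by
    rw [ContinuousLinearMap.sub_comp, hm₀ m hm]
    abel
  have h2 : ‖(f - h).comp (P hB m)‖ ≤ ‖f - h‖ * K :=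
    le_trans (ContinuousLinearMap.opNorm_comp_le _ _)
      (mul_le_mul_of_nonneg_left (norm_P_le hB m) (norm_nonneg _))
  have h3 : ‖f - h‖ < ε / (2 * (K + 1)) := by rwa [← dist_eq_norm]
  rw [dist_eq_norm, h1]
  calc ‖(f - h).comp (P hB m) + (h - f)‖ ≤ ‖(f - h).comp (P hB m)‖ + ‖h - f‖ :=
        norm_add_le _ _
    _ ≤ ‖f - h‖ * K + ‖f - h‖ := by
        rw [norm_sub_rev h f]; exact add_le_add h2 le_rfl
    _ = ‖f - h‖ * (K + 1) := by ring
    _ < (ε / (2 * (K + 1))) * (K + 1) := by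
        have hKpos : (0:ℝ) < K + 1 := by linarith
        exact mul_lt_mul_of_pos_right h3 hKpos
    _ < ε := by
        have hKpos : (0:ℝ) < K + 1 := by linarith
        rw [div_mul_eq_mul_div, mul_comm (2:ℝ) (K+1), ← div_div, mul_div_assoc]
        have : (K + 1) / (K + 1) = 1 := div_self (ne_of_gt hKpos)
        rw [this, mul_one]
        linarith
  done

end RQHIAux
namespace RQHIAux
set_option linter.unusedSectionVars false
set_option maxHeartbeats 1000000
open Filter Topology Finset

variable {X : Type*} [NormedAddCommGroup X] [NormedSpace ℝ X] [CompleteSpace X]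
  {B : ℕ → Submodule ℝ X}

/-- Each telescoping difference of adjoint projections lands in the corresponding
dual FDD space. -/
lemma comp_P_succ_sub_mem (hB : IsFDD B) (f : X →L[ℝ] ℝ) (i : ℕ) :
    f.comp (P hB (i + 1)) - f.comp (P hB i) ∈ dualFDD B i := by
  intro y hy
  have : (⨆ m ∈ {m : ℕ | m ≠ i}, B m) ≤
      LinearMap.ker ((f.comp (P hB (i + 1)) - f.comp (P hB i)) :
        X →ₗ[ℝ] ℝ) := by
    refine iSup₂_le fun n hn => fun z hz => ?_
    have hS1 : Slin hB (i+1) z = if n < i + 1 then z else 0 := Slin_single hB n z hz _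
    have hS0 : Slin hB i z = if n < i then z else 0 := Slin_single hB n z hz _
    have : f (Slin hB (i+1) z) - f (Slin hB i z) = 0 := by
      rcases lt_trichotomy n i with h | h | h
      · rw [hS1, hS0, if_pos (Nat.lt_succ_of_lt h), if_pos h, sub_self]
      · exact absurd h hn
      · rw [hS1, hS0, if_neg (by omega), if_neg (by omega), sub_self]
    simpa [LinearMap.mem_ker, P_apply] using this
  simpa [LinearMap.mem_ker] using this hy

/-- The block difference operator composed with `f`, as a finite sum of dual FDD terms. -/
lemma comp_P_sub_comp_P_eq_sum (hB : IsFDD B) (f : X →L[ℝ] ℝ) (a b : ℕ) (hab : a ≤ b) :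
    f.comp (P hB b) - f.comp (P hB a) =
      ∑ i ∈ Finset.Ico a b, (f.comp (P hB (i + 1)) - f.comp (P hB i)) := by
  rw [Finset.sum_Ico_eq_sub _ hab, Finset.sum_range_sub (f := fun i => f.comp (P hB i)),
    Finset.sum_range_sub (f := fun i => f.comp (P hB i))]
  abel

lemma comp_P_sub_comp_P_mem_blockDual (hB : IsFDD B) (f : X →L[ℝ] ℝ) (a b : ℕ) (hab : a ≤ b) :
    f.comp (P hB b) - f.comp (P hB a) ∈ ⨆ i ∈ Finset.Ico a b, dualFDD B i := by
  rw [comp_P_sub_comp_P_eq_sum hB f a b hab]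
  refine Submodule.sum_mem _ fun i hi => ?_
  exact le_iSup₂ (f := fun i (_ : i ∈ Finset.Ico a b) => dualFDD B i) i hi
    (comp_P_succ_sub_mem hB f i)

/-- Action of a block difference on a block vector. -/
lemma comp_P_sub_comp_P_mem_dualAnn (hB : IsFDD B) {k : ℕ → ℕ} (hk : SuccPartition k)
    (H : ℕ → Submodule ℝ X)
    (hHb : ∀ m, H m ≤ ⨆ i ∈ Finset.Ico (k m) (k (m + 1)), B i)
    {f : X →L[ℝ] ℝ} (hf : f ∈ dualAnn (⨆ m, H m)) (n : ℕ) :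
    f.comp (P hB (k (n + 1))) - f.comp (P hB (k n)) ∈ dualAnn (⨆ m, H m) := by
  intro y hy
  have : (⨆ m, H m) ≤ LinearMap.ker
      ((f.comp (P hB (k (n + 1))) - f.comp (P hB (k n))) : X →ₗ[ℝ] ℝ) := by
    refine iSup_le fun m => fun z hz => ?_
    have hz' : z ∈ ⨆ i ∈ Finset.Ico (k m) (k (m + 1)), B i := hHb m hz
    have key : f (Slin hB (k (n+1)) z) - f (Slin hB (k n) z) = 0 := by
      rcases lt_trichotomy m n with h | h | h
      · -- m < n : both projections act as the identity
        have h1 : Slin hB (k (n+1)) z = z := by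
          have := Slin_eq_self_on_block hB (k m) (k (m+1)) (k (n+1))
            (hk.1.monotone (by omega)) hz'
          simpa [LinearMap.mem_eqLocus] using this
        have h2 : Slin hB (k n) z = z := by
          have := Slin_eq_self_on_block hB (k m) (k (m+1)) (k n)
            (hk.1.monotone (by omega)) hz'
          simpa [LinearMap.mem_eqLocus] using this
        rw [h1, h2, sub_self]
      · -- m = n : difference acts as identity, and `f` kills `H n`
        subst h
        have h1 : Slin hB (k (m+1)) z = z := by
          have := Slin_eq_self_on_block hB (k m) (k (m+1)) (k (m+1)) le_rfl hz'
          simpa [LinearMap.mem_eqLocus] using this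
        have h2 : Slin hB (k m) z = 0 := by
          have := Slin_eq_zero_on_block hB (k m) (k (m+1)) (k m) le_rfl hz'
          simpa [LinearMap.mem_ker] using this
        rw [h1, h2, map_zero, sub_zero]
        exact hf z (le_iSup (fun m => H m) m hz)
      · -- n < m : both projections vanish
        have h1 : Slin hB (k (n+1)) z = 0 := by
          have := Slin_eq_zero_on_block hB (k m) (k (m+1)) (k (n+1))
            (hk.1.monotone (by omega)) hz'
          simpa [LinearMap.mem_ker] using this
        have h2 : Slin hB (k n) z = 0 := by
          have := Slin_eq_zero_on_block hB (k m) (k (m+1)) (k n)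
            (hk.1.monotone (by omega)) hz'
          simpa [LinearMap.mem_ker] using this
        rw [h1, h2, sub_self]
    simpa [LinearMap.mem_ker, P_apply] using key
  simpa [LinearMap.mem_ker] using this hy

/-- The fundamental density lemma: for a shrinking FDD and any sequence of subspaces `H`
supported in successive blocks, the annihilator of `⨆ H` is the closed span of its
blockwise pieces. -/
lemma density (hB : IsFDD B) (hshr : IsShrinkingFDD B) {k : ℕ → ℕ} (hk : SuccPartition k)
    (H : ℕ → Submodule ℝ X)
    (hHb : ∀ m, H m ≤ ⨆ i ∈ Finset.Ico (k m) (k (m + 1)), B i) :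
    (⨆ n, ((⨆ i ∈ Finset.Ico (k n) (k (n + 1)), dualFDD B i) ⊓
      dualAnn (⨆ m, H m))).topologicalClosure = dualAnn (⨆ m, H m) := by
  apply le_antisymm
  · refine Submodule.topologicalClosure_minimal _ ?_ (isClosed_dualAnn _)
    exact iSup_le fun n => inf_le_right
  · intro f hf
    -- the partial sums `f ∘ P (k N)` approximate `f` and lie in the span of the pieces
    have hmem : ∀ N, f.comp (P hB (k N)) ∈
        ⨆ n, ((⨆ i ∈ Finset.Ico (k n) (k (n + 1)), dualFDD B i) ⊓ dualAnn (⨆ m, H m)) := by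
      intro N
      have h0 : f.comp (P hB (k 0)) = 0 := by rw [hk.2]; exact P_zero_comp hB f
      have hsum : f.comp (P hB (k N)) =
          ∑ n ∈ Finset.range N, (f.comp (P hB (k (n+1))) - f.comp (P hB (k n))) := by
        rw [Finset.sum_range_sub (f := fun n => f.comp (P hB (k n))), h0, sub_zero]
      rw [hsum]
      refine Submodule.sum_mem _ fun n _ => ?_
      have hn1 : f.comp (P hB (k (n+1))) - f.comp (P hB (k n)) ∈
          (⨆ i ∈ Finset.Ico (k n) (k (n + 1)), dualFDD B i) ⊓ dualAnn (⨆ m, H m) :=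
        ⟨comp_P_sub_comp_P_mem_blockDual hB f _ _ (hk.1.monotone (Nat.le_succ n)),
         comp_P_sub_comp_P_mem_dualAnn hB hk H hHb hf n⟩
      exact le_iSup (fun n => (⨆ i ∈ Finset.Ico (k n) (k (n + 1)), dualFDD B i) ⊓
        dualAnn (⨆ m, H m)) n hn1
    have htend : Tendsto (fun N => f.comp (P hB (k N))) atTop (𝓝 f) :=
      (tendsto_comp_P hB hshr f).comp hk.1.tendsto_atTop
    have : f ∈ closure ((⨆ n, ((⨆ i ∈ Finset.Ico (k n) (k (n + 1)), dualFDD B i) ⊓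
        dualAnn (⨆ m, H m)) : Submodule ℝ (X →L[ℝ] ℝ)) : Set (X →L[ℝ] ℝ)) :=
      mem_closure_of_tendsto htend (Filter.Eventually.of_forall hmem)
    rwa [← Submodule.topologicalClosure_coe] at this

end RQHIAux
namespace RQHIAux
set_option linter.unusedSectionVars false
set_option maxHeartbeats 1000000
open Filter Topology Finset

variable {X : Type*} [NormedAddCommGroup X] [NormedSpace ℝ X] [CompleteSpace X]

/-- Pull a bounded linear functional on a quotient of a subspace back to the whole space,
with norm control (Hahn–Banach). -/
lemma pullback_functional (W' : Submodule ℝ X) (N' : Submodule ℝ ↥W')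
    (L : (↥W' ⧸ N') →ₗ[ℝ] ℝ) (M₀ : ℝ) (hM₀ : 0 ≤ M₀)
    (hL : ∀ z, |L z| ≤ M₀ * ‖z‖) :
    ∃ Λ : X →L[ℝ] ℝ, (∀ w : ↥W', Λ w = L (Submodule.Quotient.mk w)) ∧ ‖Λ‖ ≤ M₀ := by
  have hbnd : ∀ w : ↥W', ‖(L.comp N'.mkQ) w‖ ≤ M₀ * ‖w‖ := by
    intro w
    have h1 : ‖(L.comp N'.mkQ) w‖ = |L (Submodule.Quotient.mk w)| := by
      simp [Real.norm_eq_abs, Submodule.mkQ_apply]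
    rw [h1]
    refine le_trans (hL _) (mul_le_mul_of_nonneg_left ?_ hM₀)
    exact Submodule.Quotient.norm_mk_le N' w
  set ψ : ↥W' →L[ℝ] ℝ := LinearMap.mkContinuous (L.comp N'.mkQ) M₀ hbnd with hψ
  obtain ⟨g, hg, hgnorm⟩ := exists_extension_norm_eq W' ψ
  refine ⟨g, fun w => ?_, ?_⟩
  · rw [hg w]; simp [hψ, Submodule.mkQ_apply]
  · rw [hgnorm]
    exact LinearMap.mkContinuous_norm_le _ hM₀ _

/-- Descend a functional vanishing on `N'` to the quotient, with norm control. -/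
lemma descend_functional (W' : Submodule ℝ X) (N' : Submodule ℝ ↥W') (f : X →L[ℝ] ℝ)
    (hf : ∀ w : ↥W', w ∈ N' → f w = 0) :
    ∃ L : (↥W' ⧸ N') →ₗ[ℝ] ℝ, (∀ w : ↥W', L (Submodule.Quotient.mk w) = f w) ∧
      ∀ z, |L z| ≤ ‖f‖ * ‖z‖ := by
  have hker : N' ≤ LinearMap.ker ((f.comp W'.subtypeL : ↥W' →L[ℝ] ℝ) : ↥W' →ₗ[ℝ] ℝ) := by
    intro w hw
    simpa [LinearMap.mem_ker] using hf w hw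
  refine ⟨N'.liftQ _ hker, fun w => ?_, fun z => ?_⟩
  · simp [Submodule.liftQ_apply]
  · refine le_of_forall_pos_le_add fun ε hε => ?_
    have hε' : (0:ℝ) < ε / (‖f‖ + 1) := by positivity
    obtain ⟨m, hm, hmn⟩ := Submodule.Quotient.norm_mk_lt z hε'
    have h1 : (N'.liftQ _ hker) z = f m := by rw [← hm]; simp [Submodule.liftQ_apply]
    rw [h1]
    have h2 : |f (m : X)| ≤ ‖f‖ * ‖m‖ := by
      have := f.le_opNorm (m : X)
      rwa [Real.norm_eq_abs] at this
    have h3 : ‖f‖ * ‖m‖ ≤ ‖f‖ * (‖z‖ + ε / (‖f‖ + 1)) :=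
      mul_le_mul_of_nonneg_left hmn.le (norm_nonneg f)
    have h4 : ‖f‖ * (ε / (‖f‖ + 1)) ≤ ε := by
      rw [mul_div_assoc']
      rw [div_le_iff₀ (by positivity)]
      nlinarith [norm_nonneg f, hε.le]
    calc |f (m : X)| ≤ ‖f‖ * (‖z‖ + ε / (‖f‖ + 1)) := le_trans h2 h3
      _ = ‖f‖ * ‖z‖ + ‖f‖ * (ε / (‖f‖ + 1)) := by ring
      _ ≤ ‖f‖ * ‖z‖ + ε := by linarith

end RQHIAux
namespace RQHIAux
set_option linter.unusedSectionVars false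
set_option maxHeartbeats 1000000
open Filter Topology Finset

lemma exists_linearIndependent_of_not_fd {M : Type*} [AddCommGroup M] [Module ℝ M]
    (h : ¬FiniteDimensional ℝ M) : ∀ n : ℕ, ∃ v : Fin n → M, LinearIndependent ℝ v := by
  intro n
  induction n with
  | zero => exact ⟨fun i => 0, linearIndependent_empty_type⟩
  | succ n ih =>
    obtain ⟨v, hv⟩ := ih
    have hne : Submodule.span ℝ (Set.range v) ≠ ⊤ := by
      intro htop
      refine h ?_
      have : FiniteDimensional ℝ (Submodule.span ℝ (Set.range v)) :=
        FiniteDimensional.span_of_finite ℝ (Set.finite_range v)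
      rw [htop] at this
      exact (Submodule.topEquiv : (⊤ : Submodule ℝ M) ≃ₗ[ℝ] M).finiteDimensional
    obtain ⟨x, hx⟩ : ∃ x, x ∉ Submodule.span ℝ (Set.range v) := by
      by_contra hcon
      push_neg at hcon
      exact hne (Submodule.eq_top_iff'.2 hcon)
    exact ⟨Fin.snoc v x, linearIndependent_fin_snoc.2 ⟨hv, hx⟩⟩

lemma not_fd_of_linearIndependent {M : Type*} [AddCommGroup M] [Module ℝ M]
    (h : ∀ n : ℕ, ∃ v : Fin n → M, LinearIndependent ℝ v) : ¬FiniteDimensional ℝ M := by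
  intro hfd
  obtain ⟨v, hv⟩ := h (Module.finrank ℝ M + 1)
  have := hv.fintype_card_le_finrank
  simp [Fintype.card_fin] at this

instance dualAddCommGroup {X : Type*} [NormedAddCommGroup X] [NormedSpace ℝ X] :
    AddCommGroup (X →L[ℝ] ℝ) := ContinuousLinearMap.addCommGroup

end RQHIAux
open RQHIAux in
set_option maxHeartbeats 3000000 in
set_option synthInstance.maxHeartbeats 400000 in
/-- If `X` is a Banach space with a shrinking finite-dimensional decomposition `B` such that
`X^*`, equipped with the dual FDD, has the restricted QHI property, then `X` has the
restricted QHI property. -/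
theorem restrictedQHI_of_dual (X : Type*) [NormedAddCommGroup X] [NormedSpace ℝ X]
    [CompleteSpace X] (B : ℕ → Submodule ℝ X) (hB : IsFDD B)
    (hshr : IsShrinkingFDD B) (hdual : RestrictedQHI (dualFDD B)) :
    RestrictedQHI B := by
  classical
  intro k hk F G hGF hFB hinffd hdec
  obtain ⟨U, V, hUcl, hVcl, hUfd, hVfd, hsupUV, hinfUV, hclsup, C, hC⟩ := hdec
  -- primal data
  set W' : Submodule ℝ X := (⨆ n, F n).topologicalClosure with hW'def
  set N' : Submodule ℝ ↥W' := ((⨆ n, G n).topologicalClosure).comap W'.subtype with hN'def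
  have hN'cl : IsClosed (N' : Set ↥W') :=
    (Submodule.isClosed_topologicalClosure _).preimage
      continuous_subtype_val
  -- the complementary projections on the primal quotient
  have hcompl : IsCompl U V := ⟨disjoint_iff.2 hinfUV, codisjoint_iff.2 hsupUV⟩
  set Cb : ℝ := max C 0 + 1 with hCbdef
  have hCb1 : 1 ≤ Cb := by
    have : (0:ℝ) ≤ max C 0 := le_max_right _ _
    simp only [hCbdef]; linarith
  have hCb0 : 0 ≤ Cb := le_trans zero_le_one hCb1
  set prU := U.projectionOnto V hcompl with hprUdef
  set prV := V.projectionOnto U hcompl.symm with hprVdef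
  have hprsum : ∀ z : fddQS F G, (prU z : fddQS F G) + (prV z : fddQS F G) = z := fun z =>
    Submodule.projection_add_projection_eq_self hcompl z
  have hprU0 : ∀ z : fddQS F G, ‖(prU z : fddQS F G)‖ ≤ max C 0 * ‖z‖ := by
    intro z
    have h1 := hC (prU z : fddQS F G) (prU z).2 (prV z : fddQS F G) (prV z).2
    rw [hprsum z] at h1
    calc ‖(prU z : fddQS F G)‖ ≤ C * ‖z‖ := h1
      _ ≤ max C 0 * ‖z‖ := mul_le_mul_of_nonneg_right (le_max_left _ _) (norm_nonneg _)
  have hprUb : ∀ z : fddQS F G, ‖(prU z : fddQS F G)‖ ≤ Cb * ‖z‖ := by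
    intro z
    refine le_trans (hprU0 z) (mul_le_mul_of_nonneg_right ?_ (norm_nonneg _))
    rw [hCbdef]; linarith
  have hprVb : ∀ z : fddQS F G, ‖(prV z : fddQS F G)‖ ≤ Cb * ‖z‖ := by
    intro z
    have h1 : (prV z : fddQS F G) = z - (prU z : fddQS F G) := by
      rw [eq_sub_iff_add_eq, add_comm]; exact hprsum z
    calc ‖(prV z : fddQS F G)‖ = ‖z - (prU z : fddQS F G)‖ := by rw [h1]
      _ ≤ ‖z‖ + ‖(prU z : fddQS F G)‖ := norm_sub_le _ _
      _ ≤ ‖z‖ + max C 0 * ‖z‖ := by linarith [hprU0 z]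
      _ = Cb * ‖z‖ := by rw [hCbdef]; ring
  -- dual data
  set NA : Submodule ℝ (X →L[ℝ] ℝ) := dualAnn (⨆ m, G m) with hNAdef
  set WA : Submodule ℝ (X →L[ℝ] ℝ) := dualAnn (⨆ m, F m) with hWAdef
  set F' : ℕ → Submodule ℝ (X →L[ℝ] ℝ) := fun n =>
    (⨆ i ∈ Finset.Ico (k n) (k (n + 1)), dualFDD B i) ⊓ NA with hF'def
  set G' : ℕ → Submodule ℝ (X →L[ℝ] ℝ) := fun n =>
    (⨆ i ∈ Finset.Ico (k n) (k (n + 1)), dualFDD B i) ⊓ WA with hG'def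
  have hG'F' : ∀ n, G' n ≤ F' n := fun n =>
    inf_le_inf_left _ (dualAnn_antitone (iSup_mono hGF))
  have hF'A : ∀ n, F' n ≤ ⨆ i ∈ Finset.Ico (k n) (k (n + 1)), dualFDD B i :=
    fun n => inf_le_left
  set Y'' : Submodule ℝ (X →L[ℝ] ℝ) := (⨆ n, F' n).topologicalClosure with hY''def
  set K'' : Submodule ℝ ↥Y'' := ((⨆ n, G' n).topologicalClosure).comap Y''.subtype
    with hK''def
  have ha : Y'' = NA := by
    rw [hY''def]
    exact density hB hshr hk G fun m => le_trans (hGF m) (hFB m)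
  have hb : (⨆ n, G' n).topologicalClosure = WA :=
    density hB hshr hk F hFB
  have memY : ∀ {f : X →L[ℝ] ℝ}, f ∈ Y'' ↔ f ∈ NA := fun {f} => by rw [ha]
  have memK : ∀ (w : ↥Y''), w ∈ K'' ↔ (w : X →L[ℝ] ℝ) ∈ WA := fun w => by
    rw [hK''def, Submodule.mem_comap, hb]; rfl
  -- the lifted subspaces of `X`
  set Ut : Submodule ℝ X := Submodule.map W'.subtype (U.comap N'.mkQ) with hUtdef
  set Vt : Submodule ℝ X := Submodule.map W'.subtype (V.comap N'.mkQ) with hVtdef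
  -- basic primal facts
  have hGW : (⨆ m, G m) ≤ W' := le_trans (iSup_mono hGF) (Submodule.le_topologicalClosure _)
  have hmkQzero : ∀ (g : X) (hg : g ∈ (⨆ m, G m)), N'.mkQ ⟨g, hGW hg⟩ = 0 := by
    intro g hg
    rw [Submodule.mkQ_apply, Submodule.Quotient.mk_eq_zero]
    exact Submodule.mem_comap.2 (Submodule.le_topologicalClosure _ hg)
  have hGUt : (⨆ m, G m) ≤ Ut := by
    intro g hg
    refine Submodule.mem_map.2 ⟨⟨g, hGW hg⟩, Submodule.mem_comap.2 ?_, rfl⟩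
    rw [hmkQzero g hg]; exact U.zero_mem
  have hGVt : (⨆ m, G m) ≤ Vt := by
    intro g hg
    refine Submodule.mem_map.2 ⟨⟨g, hGW hg⟩, Submodule.mem_comap.2 ?_, rfl⟩
    rw [hmkQzero g hg]; exact V.zero_mem
  have hAnnUtNA : dualAnn Ut ≤ NA := hNAdef ▸ dualAnn_antitone hGUt
  have hAnnVtNA : dualAnn Vt ≤ NA := hNAdef ▸ dualAnn_antitone hGVt
  have hWAW : ∀ f ∈ WA, ∀ w : ↥W', f w = 0 := by
    intro f hf w
    have hw : (w : X) ∈ closure ((⨆ n, F n : Submodule ℝ X) : Set X) := by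
      rw [← Submodule.topologicalClosure_coe]; exact w.2
    exact dualAnn_apply_of_mem_closure hf hw
  have hWAUt : WA ≤ dualAnn Ut := by
    intro f hf x hx
    obtain ⟨w, -, rfl⟩ := Submodule.mem_map.1 hx
    exact hWAW f hf w
  have hWAVt : WA ≤ dualAnn Vt := by
    intro f hf x hx
    obtain ⟨w, -, rfl⟩ := Submodule.mem_map.1 hx
    exact hWAW f hf w
  have hdecomp : ∀ w : ↥W', ∃ wu wv : ↥W',
      N'.mkQ wu ∈ U ∧ N'.mkQ wv ∈ V ∧ w = wu + wv := by
    intro w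
    have hmem : N'.mkQ w ∈ U ⊔ V := by rw [hsupUV]; trivial
    obtain ⟨zu, hzu, zv, hzv, hsum⟩ := Submodule.mem_sup.1 hmem
    obtain ⟨wu, hwu⟩ := N'.mkQ_surjective zu
    refine ⟨wu, w - wu, by rw [hwu]; exact hzu, ?_, by abel⟩
    have : N'.mkQ (w - wu) = zv := by
      rw [map_sub, hwu, ← hsum]; abel
    rw [this]; exact hzv
  have hUtVtWA : ∀ f : X →L[ℝ] ℝ, f ∈ dualAnn Ut → f ∈ dualAnn Vt → f ∈ WA := by
    intro f hU hV x hx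
    have hxW : x ∈ W' := Submodule.le_topologicalClosure _ hx
    obtain ⟨wu, wv, hwu, hwv, hsum⟩ := hdecomp ⟨x, hxW⟩
    have h1 : f (wu : X) = 0 :=
      hU _ (Submodule.mem_map.2 ⟨wu, Submodule.mem_comap.2 hwu, rfl⟩)
    have h2 : f (wv : X) = 0 :=
      hV _ (Submodule.mem_map.2 ⟨wv, Submodule.mem_comap.2 hwv, rfl⟩)
    have hx2 : x = (wu : X) + (wv : X) := by
      rw [← Submodule.coe_add, ← hsum]
    rw [hx2, map_add, h1, h2, add_zero]
  have hNAN' : ∀ f ∈ NA, ∀ w : ↥W', w ∈ N' → f w = 0 := by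
    intro f hf w hw
    have hw2 : (w : X) ∈ closure ((⨆ n, G n : Submodule ℝ X) : Set X) := by
      rw [← Submodule.topologicalClosure_coe]; exact hw
    exact dualAnn_apply_of_mem_closure hf hw2
  -- membership criteria for the lifted annihilators
  have memAnnT : ∀ (VV : Submodule ℝ (fddQS F G)) (Λ : X →L[ℝ] ℝ),
      (∀ w : ↥W', N'.mkQ w ∈ VV → Λ w = 0) →
      Λ ∈ dualAnn (Submodule.map W'.subtype (VV.comap N'.mkQ)) := by
    intro VV Λ h x hx
    obtain ⟨w, hw, rfl⟩ := Submodule.mem_map.1 hx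
    exact h w (Submodule.mem_comap.1 hw)
  have memAnnVt : ∀ (Λ : X →L[ℝ] ℝ), (∀ w : ↥W', N'.mkQ w ∈ V → Λ w = 0) →
      Λ ∈ dualAnn Vt := memAnnT V
  have memAnnUt : ∀ (Λ : X →L[ℝ] ℝ), (∀ w : ↥W', N'.mkQ w ∈ U → Λ w = 0) →
      Λ ∈ dualAnn Ut := memAnnT U
  -- the Hahn–Banach splitting
  have hsplit : ∀ f : X →L[ℝ] ℝ, f ∈ NA → ∃ Φ : X →L[ℝ] ℝ,
      Φ ∈ dualAnn Vt ∧ (f - Φ) ∈ dualAnn Ut ∧ ‖Φ‖ ≤ Cb * ‖f‖ := by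
    intro f hf
    obtain ⟨L, hL1, hL2⟩ := descend_functional W' N' f (hNAN' f hf)
    set L2 : (↥W' ⧸ N') →ₗ[ℝ] ℝ := L ∘ₗ (U.subtype ∘ₗ prU) with hL2def
    have hL2eval : ∀ z : fddQS F G, L2 z = L ((prU z : fddQS F G)) := fun z => rfl
    have hL2b : ∀ z, |L2 z| ≤ (‖f‖ * Cb) * ‖z‖ := by
      intro z
      calc |L2 z| = |L ((prU z : fddQS F G))| := by rw [hL2eval]
        _ ≤ ‖f‖ * ‖(prU z : fddQS F G)‖ := hL2 _
        _ ≤ ‖f‖ * (Cb * ‖z‖) := mul_le_mul_of_nonneg_left (hprUb z) (norm_nonneg f)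
        _ = (‖f‖ * Cb) * ‖z‖ := by ring
    obtain ⟨Φ, hΦ1, hΦ2⟩ := pullback_functional W' N' L2 (‖f‖ * Cb)
      (mul_nonneg (norm_nonneg f) hCb0) hL2b
    refine ⟨Φ, memAnnVt Φ ?_, memAnnUt _ ?_, by rw [mul_comm] at hΦ2; exact hΦ2⟩
    · intro w hw
      rw [hΦ1 w, hL2eval]
      have hz : prU (Submodule.Quotient.mk w : fddQS F G) = 0 :=
        Submodule.projectionOnto_apply_of_mem_right hcompl
          (by rw [← Submodule.mkQ_apply]; exact hw)
      rw [hz, Submodule.coe_zero, map_zero]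
    · intro w hw
      have hw2 : (Submodule.Quotient.mk w : fddQS F G) ∈ U := by
        rw [← Submodule.mkQ_apply]; exact hw
      have hz : (prU (Submodule.Quotient.mk w : fddQS F G) : fddQS F G) =
          (Submodule.Quotient.mk w : fddQS F G) := by
        have := Submodule.projectionOnto_apply_left hcompl
          (⟨Submodule.Quotient.mk w, hw2⟩ : U)
        rw [show ((⟨Submodule.Quotient.mk w, hw2⟩ : U) : fddQS F G) =
          (Submodule.Quotient.mk w : fddQS F G) from rfl] at this
        rw [this]
      have hL1w : L (Submodule.Quotient.mk w) = f w := hL1 w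
      rw [ContinuousLinearMap.sub_apply, hΦ1 w, hL2eval, hz, hL1w, sub_self]
  -- the two halves of the dual decomposition
  set U₄ : Submodule ℝ (fddQS F' G') :=
    Submodule.map K''.mkQ ((dualAnn Vt).comap Y''.subtype) with hU₄def
  set V₄ : Submodule ℝ (fddQS F' G') :=
    Submodule.map K''.mkQ ((dualAnn Ut).comap Y''.subtype) with hV₄def
  -- closedness
  have hclosed : ∀ (T : Submodule ℝ (X →L[ℝ] ℝ)), IsClosed (T : Set (X →L[ℝ] ℝ)) →
      WA ≤ T → IsClosed ((Submodule.map K''.mkQ (T.comap Y''.subtype) :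
        Submodule ℝ (fddQS F' G')) : Set (fddQS F' G')) := by
    intro T hTcl hWAT
    have hq : IsQuotientMap (⇑K''.mkQ : ↥Y'' → fddQS F' G') := isQuotientMap_quot_mk
    rw [← hq.isClosed_preimage]
    have hset : (⇑K''.mkQ) ⁻¹' ((Submodule.map K''.mkQ (T.comap Y''.subtype) :
        Submodule ℝ (fddQS F' G')) : Set (fddQS F' G')) =
        ((T.comap Y''.subtype : Submodule ℝ ↥Y'') : Set ↥Y'') := by
      ext w
      simp only [Set.mem_preimage, SetLike.mem_coe]
      constructor
      · intro hmem
        have h1 : w ∈ Submodule.comap K''.mkQ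
            (Submodule.map K''.mkQ (T.comap Y''.subtype)) := hmem
        rw [Submodule.comap_map_eq, Submodule.ker_mkQ] at h1
        have hKp : K'' ≤ T.comap Y''.subtype := fun y hy =>
          Submodule.mem_comap.2 (hWAT ((memK y).1 hy))
        rwa [sup_eq_left.2 hKp] at h1
      · exact fun h => Submodule.mem_map_of_mem h
    rw [hset]
    exact hTcl.preimage continuous_subtype_val
  have hU₄cl : IsClosed ((U₄ : Submodule ℝ (fddQS F' G')) : Set (fddQS F' G')) :=
    hclosed _ (isClosed_dualAnn Vt) hWAVt
  have hV₄cl : IsClosed ((V₄ : Submodule ℝ (fddQS F' G')) : Set (fddQS F' G')) :=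
    hclosed _ (isClosed_dualAnn Ut) hWAUt
  -- sup is everything
  have hsup₄ : U₄ ⊔ V₄ = ⊤ := by
    rw [eq_top_iff]
    rintro ζ -
    obtain ⟨y, rfl⟩ := K''.mkQ_surjective ζ
    have hyNA : (y : X →L[ℝ] ℝ) ∈ NA := memY.1 y.2
    obtain ⟨Φ, hΦV, hΦU, -⟩ := hsplit _ hyNA
    have hΦNA : Φ ∈ NA := hAnnVtNA hΦV
    have hfΦNA : (y : X →L[ℝ] ℝ) - Φ ∈ NA := hAnnUtNA hΦU
    refine Submodule.mem_sup.2 ⟨K''.mkQ ⟨Φ, memY.2 hΦNA⟩,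
      Submodule.mem_map_of_mem (Submodule.mem_comap.2 hΦV),
      K''.mkQ ⟨(y : X →L[ℝ] ℝ) - Φ, memY.2 hfΦNA⟩,
      Submodule.mem_map_of_mem (Submodule.mem_comap.2 hΦU), ?_⟩
    rw [← map_add]
    congr 1
    apply Subtype.ext
    show Φ + ((y : X →L[ℝ] ℝ) - Φ) = (y : X →L[ℝ] ℝ)
    abel
  -- inf is trivial
  have hinf₄ : U₄ ⊓ V₄ = ⊥ := by
    rw [eq_bot_iff]
    rintro ζ ⟨hζU, hζV⟩
    obtain ⟨p, hp, hpeq⟩ := Submodule.mem_map.1 hζU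
    obtain ⟨r, hr, hreq⟩ := Submodule.mem_map.1 hζV
    rw [Submodule.mem_bot]
    have hpr : p - r ∈ K'' := by
      rw [← Submodule.ker_mkQ (p := K''), LinearMap.mem_ker, map_sub, hpeq, hreq, sub_self]
    have hprWA : ((p : X →L[ℝ] ℝ) - (r : X →L[ℝ] ℝ)) ∈ WA := by
      have := (memK _).1 hpr
      simpa using this
    have hpUt : (p : X →L[ℝ] ℝ) ∈ dualAnn Ut := by
      have h1 : ((p : X →L[ℝ] ℝ) - (r : X →L[ℝ] ℝ)) ∈ dualAnn Ut := hWAUt hprWA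
      have h2 : (r : X →L[ℝ] ℝ) ∈ dualAnn Ut := Submodule.mem_comap.1 hr
      have h3 := Submodule.add_mem _ h1 h2
      simpa using h3
    have hpWA : (p : X →L[ℝ] ℝ) ∈ WA := hUtVtWA _ hpUt (Submodule.mem_comap.1 hp)
    rw [← hpeq, Submodule.mkQ_apply, Submodule.Quotient.mk_eq_zero]
    exact (memK p).2 hpWA
  -- the norm estimate
  have hC₄ : ∀ u ∈ U₄, ∀ v ∈ V₄, ‖u‖ ≤ Cb * ‖u + v‖ := by
    intro u hu v hv
    obtain ⟨p, hp, hpeq⟩ := Submodule.mem_map.1 hu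
    obtain ⟨r, hr, hreq⟩ := Submodule.mem_map.1 hv
    refine le_of_forall_pos_le_add fun ε hε => ?_
    have hCbpos : (0:ℝ) < Cb := lt_of_lt_of_le zero_lt_one hCb1
    have hε' : 0 < ε / Cb := div_pos hε hCbpos
    obtain ⟨s, hs, hsn⟩ := Submodule.Quotient.norm_mk_lt (u + v) hε'
    have hsNA : (s : X →L[ℝ] ℝ) ∈ NA := memY.1 s.2
    obtain ⟨Φ, hΦV, hΦU, hΦn⟩ := hsplit _ hsNA
    have hΦNA : Φ ∈ NA := hAnnVtNA hΦV
    have hw0 : ((s : X →L[ℝ] ℝ) - (p : X →L[ℝ] ℝ) - (r : X →L[ℝ] ℝ)) ∈ WA := by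
      have h1 : s - (p + r) ∈ K'' := by
        rw [← Submodule.ker_mkQ (p := K''), LinearMap.mem_ker, map_sub, map_add, hpeq, hreq]
        rw [show K''.mkQ s = u + v from hs]
        exact sub_self _
      have := (memK _).1 h1
      simpa [sub_add_eq_sub_sub] using this
    have hUt2 : (Φ - (p : X →L[ℝ] ℝ)) ∈ dualAnn Ut := by
      have h2 : ((s : X →L[ℝ] ℝ) - Φ) ∈ dualAnn Ut := hΦU
      have h3 : (r : X →L[ℝ] ℝ) ∈ dualAnn Ut := Submodule.mem_comap.1 hr
      have h4 : ((s : X →L[ℝ] ℝ) - (p : X →L[ℝ] ℝ) - (r : X →L[ℝ] ℝ)) ∈ dualAnn Ut :=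
        hWAUt hw0
      have h5 : Φ - (p : X →L[ℝ] ℝ) =
          (((s : X →L[ℝ] ℝ) - (p : X →L[ℝ] ℝ) - (r : X →L[ℝ] ℝ)) + (r : X →L[ℝ] ℝ)) -
            ((s : X →L[ℝ] ℝ) - Φ) := by abel
      rw [h5]
      exact Submodule.sub_mem _ (Submodule.add_mem _ h4 h3) h2
    have hVt2 : (Φ - (p : X →L[ℝ] ℝ)) ∈ dualAnn Vt :=
      Submodule.sub_mem _ hΦV (Submodule.mem_comap.1 hp)
    have hWA2 : (Φ - (p : X →L[ℝ] ℝ)) ∈ WA := hUtVtWA _ hUt2 hVt2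
    have hyP : ((⟨Φ, memY.2 hΦNA⟩ : ↥Y'') - p) ∈ K'' := (memK _).2 (by simpa using hWA2)
    have hyu : K''.mkQ (⟨Φ, memY.2 hΦNA⟩ : ↥Y'') = u := by
      rw [← hpeq, Submodule.mkQ_apply, Submodule.mkQ_apply]
      exact (Submodule.Quotient.eq K'').2 hyP
    have hnorm1 : ‖u‖ ≤ ‖Φ‖ := by
      rw [← hyu, Submodule.mkQ_apply]
      exact Submodule.Quotient.norm_mk_le K'' _
    have hnorm2 : ‖Φ‖ ≤ Cb * ‖s‖ := hΦn
    calc ‖u‖ ≤ Cb * ‖s‖ := le_trans hnorm1 hnorm2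
      _ ≤ Cb * (‖u + v‖ + ε / Cb) := mul_le_mul_of_nonneg_left hsn.le hCb0
      _ = Cb * ‖u + v‖ + Cb * (ε / Cb) := by ring
      _ = Cb * ‖u + v‖ + ε := by rw [mul_div_cancel₀ _ (ne_of_gt hCbpos)]
  -- infinite-dimensionality of the two halves
  have buildIndep : ∀ (T : Submodule ℝ (X →L[ℝ] ℝ)), T ≤ NA →
      (∀ n : ℕ, ∃ c : Fin n → (X →L[ℝ] ℝ), (∀ i, c i ∈ T) ∧
        (∀ t : Fin n → ℝ, (∑ i, t i • c i) ∈ WA → t = 0)) →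
      ¬FiniteDimensional ℝ ↥(Submodule.map K''.mkQ (T.comap Y''.subtype)) := by
    intro T hTNA hfam
    refine not_fd_of_linearIndependent fun n => ?_
    obtain ⟨c, hcT, hind⟩ := hfam n
    have hymem : ∀ i, c i ∈ Y'' := fun i => memY.2 (hTNA (hcT i))
    refine ⟨fun i => ⟨K''.mkQ ⟨c i, hymem i⟩,
      Submodule.mem_map_of_mem (Submodule.mem_comap.2 (hcT i))⟩, ?_⟩
    rw [Fintype.linearIndependent_iff]
    intro t ht
    have ht2 : (∑ i, t i • K''.mkQ (⟨c i, hymem i⟩ : ↥Y'')) = 0 := by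
      have h3 := congrArg (Submodule.subtype (Submodule.map K''.mkQ (T.comap Y''.subtype))) ht
      simpa using h3
    have ht3 : K''.mkQ (∑ i, t i • (⟨c i, hymem i⟩ : ↥Y'')) = 0 := by
      rw [map_sum]
      simp only [map_smul]
      exact ht2
    have ht4 : (∑ i, t i • (⟨c i, hymem i⟩ : ↥Y'')) ∈ K'' := by
      rw [← Submodule.ker_mkQ (p := K''), LinearMap.mem_ker]
      exact ht3
    have ht5 : (∑ i, t i • c i) ∈ WA := by
      have h6 := (memK _).1 ht4
      simpa using h6
    have h7 := hind t ht5
    intro i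
    rw [h7]
    rfl
  have keyIndep : ∀ (UU VV : Submodule ℝ (fddQS F G)) (hcUV : IsCompl UU VV),
      ¬FiniteDimensional ℝ ↥UU →
      (∀ z : fddQS F G, ‖(UU.projectionOnto VV hcUV z : fddQS F G)‖ ≤ Cb * ‖z‖) →
      ∀ n : ℕ, ∃ c : Fin n → (X →L[ℝ] ℝ),
        (∀ i, c i ∈ dualAnn (Submodule.map W'.subtype (VV.comap N'.mkQ))) ∧
        (∀ t : Fin n → ℝ, (∑ i, t i • c i) ∈ WA → t = 0) := by
    intro UU VV hcUV hUUfd hbound n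
    haveI : IsClosed (N' : Set ↥W') := hN'cl
    obtain ⟨u, hu⟩ := exists_linearIndependent_of_not_fd hUUfd n
    have hub : LinearIndependent ℝ (fun j => ((u j : fddQS F G))) :=
      hu.map' UU.subtype (Submodule.ker_subtype _)
    set ub : Fin n → fddQS F G := fun j => ((u j : fddQS F G)) with hubdef
    set SZ : Submodule ℝ (fddQS F G) := Submodule.span ℝ (Set.range ub) with hSZdef
    haveI : FiniteDimensional ℝ ↥SZ :=
      FiniteDimensional.span_of_finite ℝ (Set.finite_range ub)
    set bas : Module.Basis (Fin n) ℝ ↥SZ := Module.Basis.span hub with hbasdef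
    have hcont : ∀ i, Continuous (bas.coord i) := fun i =>
      LinearMap.continuous_of_finiteDimensional _
    have hHi : ∀ i : Fin n, ∃ Hi : fddQS F G →L[ℝ] ℝ,
        ∀ x : ↥SZ, Hi x = bas.coord i x := by
      intro i
      obtain ⟨g, hg, -⟩ := exists_extension_norm_eq SZ ⟨bas.coord i, hcont i⟩
      exact ⟨g, fun x => hg x⟩
    choose Hi hHiext using hHi
    set pr := UU.projectionOnto VV hcUV with hprdef
    have hpull : ∀ i : Fin n, ∃ Λ : X →L[ℝ] ℝ,
        ∀ w : ↥W', Λ w = (Hi i) ((pr (Submodule.Quotient.mk w) : fddQS F G)) := by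
      intro i
      set Li : (↥W' ⧸ N') →ₗ[ℝ] ℝ := (Hi i).toLinearMap ∘ₗ (UU.subtype ∘ₗ pr) with hLidef
      have hLieval : ∀ z : fddQS F G, Li z = Hi i ((pr z : fddQS F G)) := fun z => rfl
      have hLib : ∀ z, |Li z| ≤ (‖Hi i‖ * Cb) * ‖z‖ := by
        intro z
        calc |Li z| = |Hi i ((pr z : fddQS F G))| := by rw [hLieval]
          _ = ‖Hi i ((pr z : fddQS F G))‖ := (Real.norm_eq_abs _).symm
          _ ≤ ‖Hi i‖ * ‖(pr z : fddQS F G)‖ := (Hi i).le_opNorm _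
          _ ≤ ‖Hi i‖ * (Cb * ‖z‖) :=
            mul_le_mul_of_nonneg_left (hbound z) (ContinuousLinearMap.opNorm_nonneg _)
          _ = (‖Hi i‖ * Cb) * ‖z‖ := by ring
      obtain ⟨Λ, hΛ1, -⟩ := pullback_functional W' N' Li (‖Hi i‖ * Cb)
        (mul_nonneg (ContinuousLinearMap.opNorm_nonneg _) hCb0) hLib
      exact ⟨Λ, fun w => by rw [hΛ1 w, hLieval]⟩
    choose Λ hΛ using hpull
    refine ⟨Λ, fun i => memAnnT VV _ ?_, ?_⟩
    · intro w hw
      rw [hΛ i w]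
      have hz : pr (Submodule.Quotient.mk w : fddQS F G) = 0 :=
        Submodule.projectionOnto_apply_of_mem_right hcUV
          (by rw [← Submodule.mkQ_apply]; exact hw)
      rw [hz, Submodule.coe_zero, map_zero]
    · intro t ht
      funext j
      obtain ⟨wj, hwj⟩ := N'.mkQ_surjective (ub j)
      have h0 : (∑ i, t i • Λ i) (wj : X) = 0 := hWAW _ ht wj
      have h1 : ∀ i, Λ i (wj : X) = Hi i (ub j) := by
        intro i
        rw [hΛ i wj]
        have hq1 : (Submodule.Quotient.mk wj : fddQS F G) = ub j := by
          rw [← Submodule.mkQ_apply]; exact hwj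
        rw [hq1]
        have h2 : pr (ub j) = u j := by
          have := Submodule.projectionOnto_apply_left hcUV (u j)
          rw [hubdef]
          exact this
        rw [h2]
      have h2 : ∀ i, Hi i (ub j) = (if j = i then (1:ℝ) else 0) := by
        intro i
        have hmem : ub j ∈ SZ := Submodule.subset_span (Set.mem_range_self j)
        have h3 : Hi i (ub j) = bas.coord i ⟨ub j, hmem⟩ := hHiext i ⟨ub j, hmem⟩
        rw [h3]
        have h4 : (⟨ub j, hmem⟩ : ↥SZ) = bas j :=
          (Module.Basis.span_apply hub j).symm
        rw [h4, Module.Basis.coord_apply, Module.Basis.repr_self, Finsupp.single_apply]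
      have h5 : (∑ i, t i • Λ i) (wj : X) = t j := by
        rw [ContinuousLinearMap.sum_apply]
        simp only [ContinuousLinearMap.smul_apply, h1, h2, smul_eq_mul, mul_ite,
          mul_one, mul_zero]
        simp
      rw [h0] at h5
      exact h5.symm
  have hU₄fd : ¬FiniteDimensional ℝ ↥U₄ :=
    buildIndep _ hAnnVtNA (keyIndep U V hcompl hUfd hprUb)
  have hV₄fd : ¬FiniteDimensional ℝ ↥V₄ :=
    buildIndep _ hAnnUtNA (keyIndep V U hcompl.symm hVfd hprVb)
  have hZ'fd : ¬FiniteDimensional ℝ (fddQS F' G') := by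
    intro hfd
    exact hU₄fd inferInstance
  refine hdual k hk F' G' hG'F' hF'A hZ'fd ⟨U₄, V₄, hU₄cl, hV₄cl, hU₄fd, hV₄fd, hsup₄,
    hinf₄, ?_, Cb, hC₄⟩
  rw [hsup₄]
  simp only [Submodule.top_coe]
  exact isClosed_univ
end
end
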